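/- arXiv:1606.02184 — 7 statements merged into one kernel-verified Lean document; each statement's English description precedes it below -/
import Mathlib

section
/- Let n ≥ 3, let D_n = ⟨a,b | a^n = b^2 = 1, bab = a^{-1}⟩ be the dihedral group of order 2n, and let S = S₁ ∪ S₂ ⊆ D_n∖{1} with S = S^{-1}, where S₁ ⊆ ⟨a⟩ and S₂ ⊆ b⟨a⟩. Then the Cayley graph X(D_n,S) is integral if and only if for every h with 1 ≤ h ≤ ⌊(n-1)/2⌋: (i) χ_h(S₁) and χ_h(S₁²) + χ_h(S₂²) are integers, and (ii) Δ_h(S) = 2[χ_h(S₁²) + χ_h(S₂²)] − (χ_h(S₁))² is a perfect square (the square of an integer). -/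
/-!
Write the elements of `D_n` as `a^j b^i` with `(i, j) ∈ Fin 2 × ZMod n`. Then `x⁻¹ y` depends only
on `i`, `i'` and `k - j`, so the adjacency matrix of `X(D_n, S)` is a `2 × 2` block matrix of
circulants, and the discrete Fourier transform of `ZMod n` conjugates it to a block diagonal matrix
with blocks `[[α(h), β(-h)], [β(h), α(-h)]]`, `h ∈ ZMod n`, where `α(h) = Σ_{a^k ∈ S} ψ(hk)`,
`β(h) = Σ_{ba^k ∈ S} ψ(hk)` and `ψ` is the standard additive character of `ZMod n`. As `S = S⁻¹`,
`α(h) = a` is real and `β(-h)` is the conjugate of `β(h)`, so the eigenvalues are `a ± b` with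
`b = |β(h)|`.

On the other hand `χ_h(S₁) = 2a`, `χ_h(S₁²) + χ_h(S₂²) = 2a² + 2b²` and `Δ_h(S) = (2b)²`. If
`p = 2a`, `w = 2b` and `q = 2a² + 2b²` are integers, then `p² + w² = 2q` forces `p ≡ w (mod 2)`, so
`a ± b = (p ± w) / 2` are integers. Finally `h` and `-h` give the same eigenvalues; when `2h = 0`
every `ψ(hk)` is `±1`, so the eigenvalues are integers; and every other class of `ZMod n` is `±h`
for some `1 ≤ h ≤ ⌊(n-1)/2⌋`.
-/

open DihedralGroup Polynomial

/-- The degree-2 irreducible character `χ_h` of the dihedral group `D_n`: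
`χ_h(a^k) = 2cos(2khπ/n)` and `χ_h(ba^k) = 0`. -/
noncomputable def chi (n h : ℕ) : DihedralGroup n → ℝ
  | .r k => 2 * Real.cos (2 * k.val * h * Real.pi / n)
  | .sr _ => 0

/-- `χ(A) = Σ_{x ∈ A} χ(x)`. -/
noncomputable def chiSum (n h : ℕ) (A : Set (DihedralGroup n)) : ℝ :=
  ∑ᶠ x ∈ A, chi n h x

/-- `χ(A²) = Σ_{x,y ∈ A} χ(xy)`, over ordered pairs. -/
noncomputable def chiSum2 (n h : ℕ) (A : Set (DihedralGroup n)) : ℝ :=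
  ∑ᶠ x ∈ A, ∑ᶠ y ∈ A, chi n h (x * y)

/-- The Cayley graph `X(G,S)`: vertices `G`, with `x,y` adjacent iff `x⁻¹y ∈ S`
(for `S` inverse-closed and not containing `1`). -/
def cayleyGraph {G : Type*} [Group G] (S : Set G) : SimpleGraph G :=
  SimpleGraph.fromRel (fun x y => x⁻¹ * y ∈ S)

open scoped Classical in
/-- The adjacency matrix of a graph, over `ℂ`. -/
noncomputable def adjMat {V : Type*} [Fintype V] (G : SimpleGraph V) : Matrix V V ℂ :=
  Matrix.of fun x y => if G.Adj x y then 1 else 0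

/-- A graph is integral if every eigenvalue of its adjacency matrix is an integer. -/
def IsIntegralGraph {V : Type*} [Fintype V] [DecidableEq V] (G : SimpleGraph V) : Prop :=
  ∀ μ ∈ spectrum ℂ (adjMat G), ∃ z : ℤ, μ = (z : ℂ)

/-- The cyclic subgroup `⟨a⟩` of `D_n`, as a set. -/
def rSet (n : ℕ) : Set (DihedralGroup n) := {x | ∃ k, x = .r k}

/-- The coset `b⟨a⟩` of `D_n`, as a set. -/
def srSet (n : ℕ) : Set (DihedralGroup n) := {x | ∃ k, x = .sr k}

/-- `S` belongs to the Boolean algebra `B(⟨a⟩)`, i.e. `S ⊆ ⟨a⟩` is a union of atoms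
`[a^l] = {a^k : gcd(k,n) = gcd(l,n)}`: membership in `S` is constant on each atom. -/
def InBooleanAlgebra (n : ℕ) (S : Set (DihedralGroup n)) : Prop :=
  S ⊆ rSet n ∧ ∀ k l : ZMod n, Nat.gcd k.val n = Nat.gcd l.val n →
    (DihedralGroup.r k ∈ S ↔ DihedralGroup.r l ∈ S)

/-- The multiplicity of `x` in the multiset `S² = {s₁s₂ : (s₁,s₂) ∈ S × S}` (ordered pairs). -/
noncomputable def sqMult {n : ℕ} (S : Set (DihedralGroup n)) (x : DihedralGroup n) : ℕ :=
  Nat.card {p : DihedralGroup n × DihedralGroup n // p.1 ∈ S ∧ p.2 ∈ S ∧ p.1 * p.2 = x}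

/-- The irreducible character `φ_h` of the cyclic group `⟨a⟩` of order `n`:
`φ_h(a^k) = e^{2πihk/n}`. -/
noncomputable def phi (n h : ℕ) (k : ZMod n) : ℂ :=
  Complex.exp (2 * Real.pi * Complex.I * h * k.val / n)

open Matrix ZMod
open scoped Kronecker ComplexConjugate

theorem Matrix.mem_spectrum_blockDiagonal {m o K : Type*} [Fintype m] [DecidableEq m] [Fintype o]
    [DecidableEq o] [Field K] (B : o → Matrix m m K) (μ : K) :
    μ ∈ spectrum K (blockDiagonal B) ↔ ∃ i, μ ∈ spectrum K (B i) := by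
  have hsub : algebraMap K _ μ - blockDiagonal B =
      blockDiagonal fun i => algebraMap K _ μ - B i := by
    ext ⟨i, k⟩ ⟨i', k'⟩
    by_cases hk : k = k' <;>
      simp [Algebra.algebraMap_eq_smul_one, blockDiagonal_apply, one_apply, hk]
  simp [spectrum.mem_iff, hsub, isUnit_iff_isUnit_det, det_blockDiagonal, Finset.prod_eq_zero_iff]

theorem mem_spectrum_hermitian_fin_two (a : ℝ) (f μ : ℂ) :
    μ ∈ spectrum ℂ !![(a : ℂ), conj f; f, (a : ℂ)] ↔ μ = a + ‖f‖ ∨ μ = a - ‖f‖ := by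
  have hdet : (algebraMap ℂ _ μ - !![(a : ℂ), conj f; f, (a : ℂ)]).det =
      (μ - (a + ‖f‖)) * (μ - (a - ‖f‖)) := by
    simp only [Algebra.algebraMap_eq_smul_one, det_fin_two, Fin.isValue, Matrix.sub_apply, Matrix.smul_apply,
      one_apply_eq, one_apply_ne, smul_eq_mul, mul_one, mul_zero, of_apply, cons_val', cons_val_zero,
      cons_val_one, cons_val_fin_one, ne_eq, zero_ne_one, one_ne_zero, not_false_eq_true, zero_sub,
      mul_neg, neg_mul, neg_neg]
    linear_combination (-1 : ℂ) * Complex.conj_mul' f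
  rw [spectrum.mem_iff, isUnit_iff_isUnit_det, hdet, isUnit_iff_ne_zero, not_not, mul_eq_zero,
    sub_eq_zero, sub_eq_zero]

open scoped Classical in
theorem adjMat_cayleyGraph_apply {G : Type*} [Group G] [Fintype G] {S : Set G}
    (h1 : (1 : G) ∉ S) (hS : S⁻¹ = S) (x y : G) :
    adjMat (cayleyGraph S) x y = if x⁻¹ * y ∈ S then 1 else 0 := by
  refine if_congr ⟨fun ⟨_, hxy⟩ => ?_, fun hxy => ⟨?_, Or.inl hxy⟩⟩ rfl rfl
  · rcases hxy with hxy | hyx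
    · exact hxy
    · rwa [← hS, Set.mem_inv, _root_.mul_inv_rev, inv_inv]
  · rintro rfl
    exact h1 (by rwa [inv_mul_cancel] at hxy)

section BlockCirculant

variable {m : Type*} [Fintype m] [DecidableEq m] {n : ℕ} [NeZero n]

noncomputable def dftMatrix (n : ℕ) [NeZero n] : Matrix (ZMod n) (ZMod n) ℂ :=
  of fun j h => stdAddChar (h * j)

theorem dftMatrix_mul_conjTranspose : dftMatrix n * (dftMatrix n)ᴴ = (n : ℂ) • 1 := by
  ext j j'
  have hψ (h : ZMod n) :
      stdAddChar (h * j) * conj (stdAddChar (h * j')) = stdAddChar (h * (j - j')) := by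
    rw [← AddChar.map_neg_eq_conj, ← AddChar.map_add_eq_mul]
    ring_nf
  simp only [dftMatrix, mul_apply, conjTranspose_apply, of_apply, RCLike.star_def, hψ,
    AddChar.sum_mulShift _ (isPrimitive_stdAddChar n), sub_eq_zero]
  simp [one_apply]

theorem isUnit_one_kronecker_dftMatrix : IsUnit ((1 : Matrix m m ℂ) ⊗ₖ dftMatrix n) := by
  have h := congrArg det (dftMatrix_mul_conjTranspose (n := n))
  rw [det_mul, det_smul, det_one, mul_one] at h
  rw [isUnit_iff_isUnit_det, det_kronecker, det_one, one_pow, one_mul, isUnit_iff_ne_zero]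
  refine pow_ne_zero _ fun h0 => ?_
  rw [h0, zero_mul] at h
  exact pow_ne_zero _ (Nat.cast_ne_zero.mpr (NeZero.ne n)) h.symm

noncomputable def blockCirculant (c : m → m → ZMod n → ℂ) : Matrix (m × ZMod n) (m × ZMod n) ℂ :=
  of fun p q => c p.1 q.1 (q.2 - p.2)

noncomputable def circulantSymbol (c : m → m → ZMod n → ℂ) (h : ZMod n) : Matrix m m ℂ :=
  of fun i i' => ∑ d, c i i' d * stdAddChar (h * d)

theorem blockCirculant_mul_one_kronecker_dftMatrix (c : m → m → ZMod n → ℂ) :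
    blockCirculant c * ((1 : Matrix m m ℂ) ⊗ₖ dftMatrix n) =
      ((1 : Matrix m m ℂ) ⊗ₖ dftMatrix n) * blockDiagonal (circulantSymbol c) := by
  ext ⟨i, j⟩ ⟨i', h⟩
  simp only [blockCirculant, circulantSymbol, dftMatrix, mul_apply, of_apply, kroneckerMap_apply,
    one_apply, blockDiagonal_apply, ite_mul, one_mul, zero_mul, mul_ite, mul_zero,
    Fintype.sum_prod_type, Finset.sum_ite_irrel, Finset.sum_const_zero, Finset.sum_ite_eq',
    Finset.sum_ite_eq, Finset.mem_univ, if_true]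
  rw [Finset.mul_sum, ← Equiv.sum_comp (Equiv.addRight j)]
  refine Finset.sum_congr rfl fun d _ => ?_
  simp only [Equiv.coe_addRight, add_sub_cancel_right, mul_add, AddChar.map_add_eq_mul]
  ring

theorem mem_spectrum_blockCirculant (c : m → m → ZMod n → ℂ) (μ : ℂ) :
    μ ∈ spectrum ℂ (blockCirculant c) ↔ ∃ h, μ ∈ spectrum ℂ (circulantSymbol c h) := by
  obtain ⟨u, hu⟩ := isUnit_one_kronecker_dftMatrix (m := m) (n := n)
  have hconj : blockCirculant c = (u : Matrix _ _ ℂ) * blockDiagonal (circulantSymbol c) *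
      (↑u⁻¹ : Matrix (m × ZMod n) (m × ZMod n) ℂ) := by
    rw [hu, ← blockCirculant_mul_one_kronecker_dftMatrix, ← hu, mul_assoc, Units.mul_inv, mul_one]
  rw [hconj, spectrum.units_conjugate, mem_spectrum_blockDiagonal]

end BlockCirculant

theorem exists_int_add_sub_iff (a b : ℝ) :
    ((∃ z : ℤ, a + b = z) ∧ ∃ z : ℤ, a - b = z) ↔
      ((∃ z : ℤ, 2 * a = z) ∧ ∃ z : ℤ, 2 * a ^ 2 + 2 * b ^ 2 = z) ∧
        ∃ z : ℤ, 2 * (2 * a ^ 2 + 2 * b ^ 2) - (2 * a) ^ 2 = z ^ 2 := by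
  constructor
  · rintro ⟨⟨p, hp⟩, q, hq⟩
    refine ⟨⟨⟨p + q, ?_⟩, p ^ 2 + q ^ 2, ?_⟩, p - q, ?_⟩ <;> push_cast <;> rw [← hp, ← hq] <;> ring
  · rintro ⟨⟨⟨p, hp⟩, q, hq⟩, z, hz⟩
    obtain ⟨w, hw⟩ : ∃ w : ℤ, 2 * b = w := by
      rcases sq_eq_sq_iff_eq_or_eq_neg.mp (show (2 * b) ^ 2 = (z : ℝ) ^ 2 by linear_combination hz)
        with h | h
      · exact ⟨z, h⟩
      · exact ⟨-z, by push_cast; exact h⟩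
    have hpw : p ^ 2 + w ^ 2 = 2 * q := by
      have : (p : ℝ) ^ 2 + (w : ℝ) ^ 2 = 2 * q := by rw [← hp, ← hw, ← hq]; ring
      exact_mod_cast this
    obtain ⟨c, hc⟩ : Even (p + w) := by
      have : Even (p ^ 2 + w ^ 2) := ⟨q, by rw [hpw]; ring⟩
      simpa [Int.even_add, Int.even_pow] using this
    have hcR : (p : ℝ) + w = c + c := by exact_mod_cast hc
    exact ⟨⟨c, by linarith⟩, c - w, by push_cast; linarith⟩

theorem ZMod.forall_iff_forall_le_half {n : ℕ} [NeZero n] {P : ZMod n → Prop}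
    (hneg : ∀ h, P (-h) → P h) (htwo : ∀ h, h + h = 0 → P h) :
    (∀ h, P h) ↔ ∀ m : ℕ, 1 ≤ m → m ≤ (n - 1) / 2 → P m := by
  refine ⟨fun hP m _ _ => hP m, fun hP h => ?_⟩
  by_cases hh : h + h = 0
  · exact htwo h hh
  have hv : h.val ≠ 0 := fun h0 => hh (by rw [(ZMod.val_eq_zero h).mp h0, add_zero])
  have hv2 : h.val + h.val ≠ n := fun h2 =>
    hh (by rw [← ZMod.natCast_zmod_val h, ← Nat.cast_add, h2, ZMod.natCast_self])
  have hlt := ZMod.val_lt h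
  rcases lt_or_gt_of_ne hv2 with hlt2 | hgt2
  · simpa using hP h.val (by omega) (by omega)
  · apply hneg
    have hcast : ((n - h.val : ℕ) : ZMod n) = -h := by
      rw [Nat.cast_sub hlt.le, ZMod.natCast_self, ZMod.natCast_zmod_val, zero_sub]
    simpa [hcast] using hP (n - h.val) (by omega) (by omega)

section Dihedral

variable {n : ℕ}

/-- `(i, j) ↦ a^j b^i`. In these coordinates `x⁻¹ y` depends only on `i`, `i'` and `k - j`
(`dihedralCoords_inv_mul`), so that adjacency matrices of Cayley graphs are block circulant. -/
def dihedralCoords (n : ℕ) : Fin 2 × ZMod n ≃ DihedralGroup n where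
  toFun p := if p.1 = 0 then r p.2 else sr (-p.2)
  invFun
    | r k => (0, k)
    | sr k => (1, -k)
  left_inv p := by
    rcases p with ⟨i, k⟩
    fin_cases i <;> simp
  right_inv x := by rcases x with k | k <;> simp

theorem dihedralCoords_inv_mul (i i' : Fin 2) (j k : ZMod n) :
    (dihedralCoords n (i, j))⁻¹ * dihedralCoords n (i', k) =
      (dihedralCoords n (i, 0))⁻¹ * dihedralCoords n (i', k - j) := by
  fin_cases i <;> fin_cases i' <;>
    simp [dihedralCoords, inv_r, inv_sr, r_mul_r, r_mul_sr, sr_mul_r, sr_mul_sr] <;> ring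

theorem finsum_mem_image_r {M : Type*} [AddCommMonoid M] (T : Finset (ZMod n))
    (f : DihedralGroup n → M) : ∑ᶠ x ∈ r '' ↑T, f x = ∑ k ∈ T, f (r k) := by
  rw [finsum_mem_image fun _ _ _ _ => r.inj, finsum_mem_coe_finset]

theorem finsum_mem_image_sr {M : Type*} [AddCommMonoid M] (T : Finset (ZMod n))
    (f : DihedralGroup n → M) : ∑ᶠ x ∈ sr '' ↑T, f x = ∑ k ∈ T, f (sr k) := by
  rw [finsum_mem_image fun _ _ _ _ => sr.inj, finsum_mem_coe_finset]

variable [NeZero n]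

open scoped Classical

noncomputable def rPreimage (S : Set (DihedralGroup n)) : Finset (ZMod n) := {k | r k ∈ S}

noncomputable def srPreimage (S : Set (DihedralGroup n)) : Finset (ZMod n) := {k | sr k ∈ S}

theorem image_r_rPreimage {A : Set (DihedralGroup n)} (hA : A ⊆ rSet n) :
    r '' ↑(rPreimage A) = A := by
  ext x
  refine ⟨fun ⟨k, hk, hx⟩ => by simpa [rPreimage, hx] using hk, fun hx => ?_⟩
  obtain ⟨k, rfl⟩ := hA hx
  exact ⟨k, by simpa [rPreimage] using hx, rfl⟩

theorem image_sr_srPreimage {A : Set (DihedralGroup n)} (hA : A ⊆ srSet n) :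
    sr '' ↑(srPreimage A) = A := by
  ext x
  refine ⟨fun ⟨k, hk, hx⟩ => by simpa [srPreimage, hx] using hk, fun hx => ?_⟩
  obtain ⟨k, rfl⟩ := hA hx
  exact ⟨k, by simpa [srPreimage] using hx, rfl⟩

theorem rPreimage_union_of_subset_srSet {A B : Set (DihedralGroup n)} (hB : B ⊆ srSet n) :
    rPreimage (A ∪ B) = rPreimage A := by
  ext k
  simpa [rPreimage] using fun hk => by simpa [srSet] using hB hk

theorem srPreimage_union_of_subset_rSet {A B : Set (DihedralGroup n)} (hA : A ⊆ rSet n) :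
    srPreimage (A ∪ B) = srPreimage B := by
  ext k
  simpa [srPreimage] using fun hk => by simpa [rSet] using hA hk

theorem neg_mem_rPreimage {S : Set (DihedralGroup n)} (hS : S⁻¹ = S) :
    ∀ k ∈ rPreimage S, -k ∈ rPreimage S := by
  intro k hk
  simp only [rPreimage, Finset.mem_filter, Finset.mem_univ, true_and] at hk ⊢
  rwa [← inv_r, ← Set.mem_inv, hS]

noncomputable def fourierSum (T : Finset (ZMod n)) (h : ZMod n) : ℂ :=
  ∑ k ∈ T, stdAddChar (h * k)

theorem conj_fourierSum (T : Finset (ZMod n)) (h : ZMod n) :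
    conj (fourierSum T h) = fourierSum T (-h) := by
  simp [fourierSum, ← AddChar.map_neg_eq_conj]

theorem fourierSum_neg_of_neg_mem {T : Finset (ZMod n)} (hT : ∀ k ∈ T, -k ∈ T) (h : ZMod n) :
    fourierSum T (-h) = fourierSum T h :=
  Finset.sum_nbij' Neg.neg Neg.neg hT hT (by simp) (by simp) (by simp)

theorem ofReal_re_fourierSum {T : Finset (ZMod n)} (hT : ∀ k ∈ T, -k ∈ T) (h : ZMod n) :
    ((fourierSum T h).re : ℂ) = fourierSum T h :=
  Complex.conj_eq_iff_re.mp (by rw [conj_fourierSum, fourierSum_neg_of_neg_mem hT])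

theorem fourierSum_mul_fourierSum (T : Finset (ZMod n)) (h h' : ZMod n) :
    fourierSum T h * fourierSum T h' = ∑ k ∈ T, ∑ l ∈ T, stdAddChar (h * k + h' * l) := by
  simp only [fourierSum, Finset.sum_mul_sum, AddChar.map_add_eq_mul]

theorem exists_int_fourierSum_of_add_self_eq_zero (T : Finset (ZMod n)) {h : ZMod n}
    (hh : h + h = 0) : ∃ z : ℤ, fourierSum T h = z := by
  have hsign (k : ZMod n) : ∃ z : ℤ, stdAddChar (h * k) = z := by
    have hsq : stdAddChar (h * k) ^ 2 = 1 := by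
      rw [sq, ← AddChar.map_add_eq_mul, ← add_mul, hh, zero_mul, AddChar.map_zero_eq_one]
    rcases sq_eq_one_iff.mp hsq with h1 | h1
    · exact ⟨1, by simp [h1]⟩
    · exact ⟨-1, by simp [h1]⟩
  choose z hz using hsign
  exact ⟨∑ k ∈ T, z k, by simp [fourierSum, hz]⟩

noncomputable def cayleyCoeff (S : Set (DihedralGroup n)) (i i' : Fin 2) (d : ZMod n) : ℂ :=
  if (dihedralCoords n (i, 0))⁻¹ * dihedralCoords n (i', d) ∈ S then 1 else 0

theorem submatrix_adjMat_cayleyGraph {S : Set (DihedralGroup n)}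
    (h1 : (1 : DihedralGroup n) ∉ S) (hS : S⁻¹ = S) :
    (adjMat (cayleyGraph S)).submatrix (dihedralCoords n) (dihedralCoords n) =
      blockCirculant (cayleyCoeff S) := by
  ext ⟨i, j⟩ ⟨i', k⟩
  rw [submatrix_apply, adjMat_cayleyGraph_apply h1 hS, dihedralCoords_inv_mul]
  rfl

theorem circulantSymbol_cayleyCoeff (S : Set (DihedralGroup n)) (h : ZMod n) :
    circulantSymbol (cayleyCoeff S) h =
      !![fourierSum (rPreimage S) h, fourierSum (srPreimage S) (-h);
        fourierSum (srPreimage S) h, fourierSum (rPreimage S) (-h)] := by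
  ext i i'
  fin_cases i <;> fin_cases i' <;>
    simp only [circulantSymbol, cayleyCoeff, dihedralCoords, fourierSum, rPreimage, srPreimage,
      Finset.sum_filter, Equiv.coe_fn_mk, Fin.isValue, Fin.zero_eta, Fin.mk_one, r_zero, neg_zero,
      inv_one, inv_sr, sr_mul_r, sr_mul_sr, zero_add, sub_zero, mul_ite, ite_mul, one_mul, zero_mul,
      of_apply, one_ne_zero, ↓reduceIte, neg_mul, cons_val', cons_val_zero, cons_val_one,
      cons_val_fin_one] <;>
    exact Fintype.sum_equiv (Equiv.neg _) _ _ fun x => by simp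

theorem mem_spectrum_adjMat_cayleyGraph {S : Set (DihedralGroup n)}
    (h1 : (1 : DihedralGroup n) ∉ S) (hS : S⁻¹ = S) (μ : ℂ) :
    μ ∈ spectrum ℂ (adjMat (cayleyGraph S)) ↔ ∃ h,
      μ = (fourierSum (rPreimage S) h).re + ‖fourierSum (srPreimage S) h‖ ∨
        μ = (fourierSum (rPreimage S) h).re - ‖fourierSum (srPreimage S) h‖ := by
  rw [← AlgEquiv.spectrum_eq (reindexAlgEquiv ℂ ℂ (dihedralCoords n).symm), coe_reindexAlgEquiv,
    reindex_apply, Equiv.symm_symm, submatrix_adjMat_cayleyGraph h1 hS, mem_spectrum_blockCirculant]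
  refine exists_congr fun h => ?_
  rw [circulantSymbol_cayleyCoeff, fourierSum_neg_of_neg_mem (neg_mem_rPreimage hS),
    ← conj_fourierSum, ← ofReal_re_fourierSum (neg_mem_rPreimage hS),
    mem_spectrum_hermitian_fin_two, Complex.ofReal_re]

theorem isIntegralGraph_cayleyGraph_iff {S : Set (DihedralGroup n)}
    (h1 : (1 : DihedralGroup n) ∉ S) (hS : S⁻¹ = S) :
    IsIntegralGraph (cayleyGraph S) ↔ ∀ h,
      (∃ z : ℤ, (fourierSum (rPreimage S) h).re + ‖fourierSum (srPreimage S) h‖ = z) ∧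
        ∃ z : ℤ, (fourierSum (rPreimage S) h).re - ‖fourierSum (srPreimage S) h‖ = z := by
  simp only [IsIntegralGraph, mem_spectrum_adjMat_cayleyGraph h1 hS, forall_exists_index, or_imp,
    forall_and, forall_comm (α := ℂ), forall_eq]
  norm_cast

theorem ofReal_chi_r (h : ℕ) (k : ZMod n) :
    (chi n h (r k) : ℂ) = stdAddChar ((h : ZMod n) * k) + stdAddChar (-(h : ZMod n) * k) := by
  rw [show (h : ZMod n) * k = ((h * k.val : ℤ) : ZMod n) by simp,
    show -(h : ZMod n) * k = ((-(h * k.val) : ℤ) : ZMod n) by simp,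
    stdAddChar_coe, stdAddChar_coe, chi]
  push_cast
  rw [Complex.two_cos]
  congr 2 <;> field_simp

theorem chiSum_image_r (h : ℕ) (T : Finset (ZMod n)) :
    chiSum n h (r '' ↑T) = 2 * (fourierSum T h).re := by
  have hC : (chiSum n h (r '' ↑T) : ℂ) = fourierSum T h + conj (fourierSum T h) := by
    rw [conj_fourierSum, chiSum, finsum_mem_image_r]
    push_cast
    simp only [ofReal_chi_r, Finset.sum_add_distrib, fourierSum]
  rw [Complex.add_conj] at hC
  exact_mod_cast hC

theorem chiSum2_image_r (h : ℕ) {T : Finset (ZMod n)} (hT : ∀ k ∈ T, -k ∈ T) :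
    chiSum2 n h (r '' ↑T) = 2 * (fourierSum T h).re ^ 2 := by
  have hC : (chiSum2 n h (r '' ↑T) : ℂ) =
      fourierSum T h * fourierSum T h + fourierSum T (-h) * fourierSum T (-h) := by
    simp only [chiSum2, finsum_mem_image_r, r_mul_r, fourierSum_mul_fourierSum, ← Finset.sum_add_distrib]
    push_cast
    simp only [ofReal_chi_r, mul_add]
  rw [fourierSum_neg_of_neg_mem hT, ← ofReal_re_fourierSum hT] at hC
  apply Complex.ofReal_injective
  rw [hC]
  push_cast
  ring

theorem chiSum2_image_sr (h : ℕ) (T : Finset (ZMod n)) :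
    chiSum2 n h (sr '' ↑T) = 2 * ‖fourierSum T h‖ ^ 2 := by
  have hC : (chiSum2 n h (sr '' ↑T) : ℂ) =
      fourierSum T (-h) * fourierSum T h + fourierSum T h * fourierSum T (-h) := by
    simp only [chiSum2, finsum_mem_image_sr, sr_mul_sr, fourierSum_mul_fourierSum,
      ← Finset.sum_add_distrib]
    push_cast
    refine Finset.sum_congr rfl fun k _ => Finset.sum_congr rfl fun l _ => ?_
    rw [ofReal_chi_r]
    ring_nf
  rw [← conj_fourierSum, mul_comm, ← two_mul, Complex.mul_conj, Complex.normSq_eq_norm_sq] at hC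
  exact_mod_cast hC

end Dihedral

theorem stmt0_general (n : ℕ) [NeZero n]
    (S S₁ S₂ : Set (DihedralGroup n)) (hS : S = S₁ ∪ S₂)
    (h1 : (1 : DihedralGroup n) ∉ S) (hSinv : S⁻¹ = S)
    (hS₁ : S₁ ⊆ rSet n) (hS₂ : S₂ ⊆ srSet n) :
    IsIntegralGraph (cayleyGraph S) ↔
      ∀ h : ℕ, 1 ≤ h → h ≤ (n - 1) / 2 →
        ((∃ z : ℤ, chiSum n h S₁ = (z : ℝ)) ∧
          (∃ z : ℤ, chiSum2 n h S₁ + chiSum2 n h S₂ = (z : ℝ))) ∧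
        (∃ z : ℤ, 2 * (chiSum2 n h S₁ + chiSum2 n h S₂) - (chiSum n h S₁) ^ 2 = (z : ℝ) ^ 2) := by
  have hr : rPreimage S = rPreimage S₁ := hS ▸ rPreimage_union_of_subset_srSet hS₂
  have hsr : srPreimage S = srPreimage S₂ := hS ▸ srPreimage_union_of_subset_rSet hS₁
  have hsymm := neg_mem_rPreimage hSinv
  rw [isIntegralGraph_cayleyGraph_iff h1 hSinv, ← image_r_rPreimage hS₁, ← image_sr_srPreimage hS₂,
    ← hr, ← hsr]
  simp only [chiSum_image_r, chiSum2_image_r _ hsymm, chiSum2_image_sr, ← exists_int_add_sub_iff]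
  refine ZMod.forall_iff_forall_le_half (fun h hP => ?_) fun h hh => ?_
  · rwa [fourierSum_neg_of_neg_mem hsymm, ← conj_fourierSum, Complex.norm_conj] at hP
  · obtain ⟨z₁, hz₁⟩ := exists_int_fourierSum_of_add_self_eq_zero (rPreimage S) hh
    obtain ⟨z₂, hz₂⟩ := exists_int_fourierSum_of_add_self_eq_zero (srPreimage S) hh
    rw [hz₁, hz₂, Complex.intCast_re, Complex.norm_intCast]
    exact ⟨⟨z₁ + |z₂|, by push_cast; ring⟩, z₁ - |z₂|, by push_cast; ring⟩

/-- Theorem 3.1. `X(D_n,S)` is integral iff for all `1 ≤ h ≤ ⌊(n-1)/2⌋`: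
(i) `χ_h(S₁)` and `χ_h(S₁²) + χ_h(S₂²)` are integers, and
(ii) `Δ_h(S) = 2[χ_h(S₁²)+χ_h(S₂²)] − (χ_h(S₁))²` is the square of an integer. -/
theorem stmt0 (n : ℕ) (hn : 3 ≤ n) [NeZero n]
    (S S₁ S₂ : Set (DihedralGroup n)) (hS : S = S₁ ∪ S₂)
    (h1 : (1 : DihedralGroup n) ∉ S) (hSinv : S⁻¹ = S)
    (hS₁ : S₁ ⊆ rSet n) (hS₂ : S₂ ⊆ srSet n) :
    IsIntegralGraph (cayleyGraph S) ↔
      ∀ h : ℕ, 1 ≤ h → h ≤ (n - 1) / 2 →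
        ((∃ z : ℤ, chiSum n h S₁ = (z : ℝ)) ∧
          (∃ z : ℤ, chiSum2 n h S₁ + chiSum2 n h S₂ = (z : ℝ))) ∧
        (∃ z : ℤ, 2 * (chiSum2 n h S₁ + chiSum2 n h S₂) - (chiSum n h S₁) ^ 2 = (z : ℝ) ^ 2) :=
  stmt0_general n S S₁ S₂ hS h1 hSinv hS₁ hS₂
end

section
/- Let n ≥ 3, let D_n = ⟨a,b | a^n = b^2 = 1, bab = a^{-1}⟩, and let S = S₁ ∪ S₂ ⊆ D_n∖{1} with S = S^{-1}, where S₁ ⊆ ⟨a⟩ and S₂ ⊆ b⟨a⟩. If both S₁ and bS₂ = {bs : s ∈ S₂} are unions of atoms of the Boolean algebra B(⟨a⟩), then the Cayley graph X(D_n,S) is integral. -/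
/-! The vectors `W_{h,ε}` with `W(a^k) = ζ^{hk}` and `W(ba^k) = ε ζ^{-hk}` (`ζ = e^{2πi/n}`,
`ε = ±1`) span `ℂ^{D_n}`, and when the connection set is invariant under `k ↦ -k` on both cosets
they are eigenvectors of the Cayley graph with eigenvalue
`Σ_{a^k ∈ S} ζ^{hk} + ε Σ_{ba^k ∈ S} ζ^{hk}`; so these are all its eigenvalues.
An atom of `B(⟨a⟩)` is the set of elements of a given additive order, and it is closed under
negation. The sum of a character over the elements of order `m` is an integer: by induction over
the divisors of `m`, since the sum over the subgroup `{k : m • k = 0}` is its order or `0`. -/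

open DihedralGroup Polynomial

open Finset
open scoped Matrix

namespace AddChar
variable {G R : Type*} [AddCommGroup G] [Fintype G] [DecidableEq G] [CommRing R] [IsDomain R]

lemma sum_filter_nsmul_eq_zero_mem_bot (ψ : AddChar G R) (m : ℕ) :
    ∑ k ∈ univ.filter (fun k => m • k = 0), ψ k ∈ (⊥ : Subring R) := by
  set H := (nsmulAddMonoidHom m : G →+ G).ker
  rw [Finset.sum_subtype _ (p := (· ∈ H)) (by simp [H])]
  change ∑ k : H, ψ.compAddMonoidHom H.subtype k ∈ _
  rw [sum_eq_ite]
  split_ifs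
  · exact natCast_mem _ _
  · exact zero_mem _

lemma sum_filter_addOrderOf_eq_mem_bot (ψ : AddChar G R) (m : ℕ) :
    ∑ k ∈ univ.filter (fun k => addOrderOf k = m), ψ k ∈ (⊥ : Subring R) := by
  induction m using Nat.strong_induction_on with
  | _ m ih =>
  rcases Nat.eq_zero_or_pos m with rfl | hm
  · simp [(addOrderOf_pos _).ne']
  have hsplit : ∑ e ∈ m.divisors, ∑ k ∈ univ.filter (fun k => addOrderOf k = e), ψ k
      = ∑ k ∈ univ.filter (fun k => m • k = 0), ψ k := by
    rw [← sum_fiberwise_of_maps_to (g := addOrderOf) (t := m.divisors) (f := ψ)]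
    · refine sum_congr rfl fun e he => sum_congr ?_ fun _ _ => rfl
      ext k
      simp only [mem_filter, mem_univ, true_and, iff_and_self]
      rintro rfl
      exact addOrderOf_dvd_iff_nsmul_eq_zero.mp (Nat.dvd_of_mem_divisors he)
    · intro k hk
      simp only [mem_filter, mem_univ, true_and] at hk
      exact Nat.mem_divisors.mpr ⟨addOrderOf_dvd_of_nsmul_eq_zero hk, hm.ne'⟩
  rw [← Nat.cons_self_properDivisors hm.ne', sum_cons, ← eq_sub_iff_add_eq] at hsplit
  rw [hsplit]
  exact sub_mem (sum_filter_nsmul_eq_zero_mem_bot ψ m)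
    (sum_mem fun e he => ih e (Nat.mem_properDivisors.mp he).2)

lemma sum_mul_mem_bot_of_addOrderOf (ψ : AddChar G R) (c : G → R)
    (hc : ∀ k, c k ∈ (⊥ : Subring R))
    (hord : ∀ k l, addOrderOf k = addOrderOf l → c k = c l) :
    ∑ k, c k * ψ k ∈ (⊥ : Subring R) := by
  rw [← sum_fiberwise_of_maps_to (g := addOrderOf) (t := univ.image addOrderOf)
    fun k _ => mem_image_of_mem _ (mem_univ k)]
  refine sum_mem fun m hm => ?_
  obtain ⟨k₀, -, rfl⟩ := mem_image.mp hm
  rw [sum_congr rfl fun k hk => by rw [hord k k₀ (mem_filter.mp hk).2], ← mul_sum]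
  exact mul_mem (hc k₀) (sum_filter_addOrderOf_eq_mem_bot ψ _)

end AddChar

namespace ZMod
variable {n : ℕ} [NeZero n]

lemma gcd_val_eq_of_addOrderOf_eq {k l : ZMod n} (h : addOrderOf k = addOrderOf l) :
    k.val.gcd n = l.val.gcd n := by
  rw [← natCast_zmod_val k, ← natCast_zmod_val l, addOrderOf_coe _ (NeZero.ne n),
    addOrderOf_coe _ (NeZero.ne n), Nat.div_eq_iff_eq_of_dvd_dvd (NeZero.ne n)
      (Nat.gcd_dvd_left _ _) (Nat.gcd_dvd_left _ _)] at h
  rw [Nat.gcd_comm, h, Nat.gcd_comm]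

lemma exists_eq_sum_mul_stdAddChar (Φ : ZMod n → ℂ) :
    ∃ a : ZMod n → ℂ, ∀ k, Φ k = ∑ h, a h * stdAddChar (h * k) := by
  refine ⟨fun h => (n : ℂ)⁻¹ * 𝓕 Φ h, fun k => ?_⟩
  rw [← LinearEquiv.symm_apply_apply 𝓕 Φ, invDFT_apply, smul_eq_mul, mul_sum]
  simp only [LinearEquiv.apply_symm_apply, smul_eq_mul]
  exact sum_congr rfl fun h _ => by ring

lemma sum_mul_stdAddChar_neg (c : ZMod n → ℂ) (hc : ∀ k, c (-k) = c k) (h : ZMod n) :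
    ∑ k, c k * stdAddChar (-(h * k)) = ∑ k, c k * stdAddChar (h * k) :=
  Fintype.sum_equiv (Equiv.neg _) _ _ fun k => by simp [hc]

end ZMod

namespace Module.End
variable {K V ι : Type*} [Field K] [AddCommGroup V] [Module K V] [FiniteDimensional K V]

lemma spectrum_subset_range_of_span_eigenvectors (f : End K V) (w : ι → V) (μ : ι → K)
    (hw : ∀ i, f (w i) = μ i • w i) (hspan : Submodule.span K (Set.range w) = ⊤) :
    spectrum K f ⊆ Set.range μ := by
  intro ν hν
  by_contra hνμ
  refine spectrum.mem_iff.mp hν ((LinearMap.isUnit_iff_range_eq_top _).mpr ?_)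
  rw [eq_top_iff, ← hspan, Submodule.span_le]
  rintro _ ⟨i, rfl⟩
  have hne : ν - μ i ≠ 0 := sub_ne_zero.mpr fun h => hνμ ⟨i, h.symm⟩
  refine ⟨(ν - μ i)⁻¹ • w i, ?_⟩
  rw [map_smul, LinearMap.sub_apply, Module.algebraMap_end_apply, hw, ← sub_smul, smul_smul,
    inv_mul_cancel₀ hne, one_smul]

end Module.End

section Cayley
variable {G : Type*} [Group G]

lemma cayleyGraph_adj {S : Set G} (h1 : 1 ∉ S) (hinv : S⁻¹ = S) {x y : G} :
    (cayleyGraph S).Adj x y ↔ x⁻¹ * y ∈ S := by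
  rw [cayleyGraph, SimpleGraph.fromRel_adj]
  constructor
  · rintro ⟨-, h | h⟩
    · exact h
    · rw [← hinv, Set.mem_inv, mul_inv_rev, inv_inv]
      exact h
  · intro h
    refine ⟨fun hxy => h1 ?_, Or.inl h⟩
    rwa [hxy, inv_mul_cancel] at h

lemma adjMat_cayleyGraph [Fintype G] {S : Set G} (h1 : 1 ∉ S) (hinv : S⁻¹ = S) :
    adjMat (cayleyGraph S) = Matrix.of fun x y => S.indicator 1 (x⁻¹ * y) := by
  classical
  ext x y
  simp only [adjMat, Matrix.of_apply, Set.indicator_apply, Pi.one_apply]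
  exact if_congr (cayleyGraph_adj h1 hinv) rfl rfl

lemma Matrix.of_inv_mul_mulVec [Fintype G] {R : Type*} [NonUnitalNonAssocSemiring R]
    (F : G → R) (v : G → R) (x : G) :
    ((Matrix.of fun x y => F (x⁻¹ * y)) *ᵥ v) x = ∑ z, F z * v (x * z) := by
  simp only [Matrix.mulVec, dotProduct, Matrix.of_apply]
  exact (Fintype.sum_equiv (Equiv.mulLeft x) _ _ fun z => by simp).symm

end Cayley

namespace DihedralGroup
variable {n : ℕ} [NeZero n]

local notation "ψ" => ZMod.stdAddChar (N := n)

lemma sum_univ_eq_sum_r_add_sum_sr {M : Type*} [AddCommMonoid M] (F : DihedralGroup n → M) :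
    ∑ x, F x = ∑ k, F (r k) + ∑ k, F (sr k) := by
  rw [← Equiv.sum_comp equivSum.symm F, Fintype.sum_sum_type]
  rfl

noncomputable def eigenvector (h : ZMod n) (ε : ℂ) : DihedralGroup n → ℂ
  | r k => ψ (h * k)
  | sr k => ε * ψ (-(h * k))

lemma of_inv_mul_mulVec_eigenvector (F : DihedralGroup n → ℂ)
    (hr : ∀ k, F (r (-k)) = F (r k)) (hsr : ∀ k, F (sr (-k)) = F (sr k))
    (h : ZMod n) {ε : ℂ} (hε : ε * ε = 1) :
    (Matrix.of fun x y => F (x⁻¹ * y)) *ᵥ eigenvector h ε =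
      ((∑ k, F (r k) * ψ (h * k)) + ε * ∑ k, F (sr k) * ψ (h * k)) • eigenvector h ε := by
  funext x
  rw [Matrix.of_inv_mul_mulVec, sum_univ_eq_sum_r_add_sum_sr, Pi.smul_apply, smul_eq_mul]
  cases x with
  | r j =>
    have e₁ : ∀ k, F (r k) * ψ (h * (j + k)) = ψ (h * j) * (F (r k) * ψ (h * k)) := fun k => by
      rw [mul_add, AddChar.map_add_eq_mul]; ring
    have e₂ : ∀ k, F (sr k) * (ε * ψ (-(h * (k - j)))) =
        ε * ψ (h * j) * (F (sr k) * ψ (-(h * k))) := fun k => by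
      rw [show -(h * (k - j)) = h * j + -(h * k) by ring, AddChar.map_add_eq_mul]; ring
    simp only [r_mul_r, r_mul_sr, eigenvector, e₁, e₂, ← mul_sum,
      ZMod.sum_mul_stdAddChar_neg (fun k => F (sr k)) hsr]
    ring
  | sr j =>
    have e₁ : ∀ k, F (r k) * (ε * ψ (-(h * (j + k)))) =
        ε * ψ (-(h * j)) * (F (r k) * ψ (-(h * k))) := fun k => by
      rw [show -(h * (j + k)) = -(h * j) + -(h * k) by ring, AddChar.map_add_eq_mul]; ring
    have e₂ : ∀ k, F (sr k) * ψ (h * (k - j)) = ψ (-(h * j)) * (F (sr k) * ψ (h * k)) :=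
      fun k => by rw [show h * (k - j) = -(h * j) + h * k by ring, AddChar.map_add_eq_mul]; ring
    simp only [sr_mul_r, sr_mul_sr, eigenvector, e₁, e₂, ← mul_sum,
      ZMod.sum_mul_stdAddChar_neg (fun k => F (r k)) hr]
    linear_combination -(ψ (-(h * j)) * ∑ k, F (sr k) * ψ (h * k)) * hε

lemma span_range_eigenvector :
    Submodule.span ℂ (Set.range fun p : ZMod n × ℤˣ => eigenvector p.1 ((p.2 : ℤ) : ℂ)) = ⊤ := by
  refine eq_top_iff.mpr fun v _ => ?_
  obtain ⟨a, ha⟩ := ZMod.exists_eq_sum_mul_stdAddChar fun k => v (r k)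
  obtain ⟨b, hb⟩ := ZMod.exists_eq_sum_mul_stdAddChar fun k => v (sr (-k))
  have hv : v = ∑ h, (((a h + b h) / 2) • eigenvector h 1 +
      ((a h - b h) / 2) • eigenvector h (-1)) := by
    funext x
    cases x with
    | r k =>
      simp only [ha k, Finset.sum_apply, Pi.add_apply, Pi.smul_apply, eigenvector, smul_eq_mul]
      exact sum_congr rfl fun h _ => by ring
    | sr k =>
      simp only [show v (sr k) = v (sr (-(-k))) by rw [neg_neg], hb (-k), Finset.sum_apply,
        Pi.add_apply, Pi.smul_apply, eigenvector, smul_eq_mul, mul_neg]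
      exact sum_congr rfl fun h _ => by ring
  rw [hv]
  refine Submodule.sum_mem _ fun h _ => Submodule.add_mem _
    (Submodule.smul_mem _ _ (Submodule.subset_span ⟨(h, 1), by simp⟩))
    (Submodule.smul_mem _ _ (Submodule.subset_span ⟨(h, -1), by simp⟩))

end DihedralGroup

lemma InBooleanAlgebra.indicator_eq_of_addOrderOf_eq {n : ℕ} [NeZero n]
    {S T : Set (DihedralGroup n)} (hT : InBooleanAlgebra n T) {φ : ZMod n → DihedralGroup n}
    (hφ : ∀ k, φ k ∈ S ↔ r k ∈ T) {k l : ZMod n} (h : addOrderOf k = addOrderOf l) :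
    S.indicator (1 : DihedralGroup n → ℂ) (φ k) = S.indicator 1 (φ l) := by
  classical
  simp only [Set.indicator_apply, Pi.one_apply, hφ, hT.2 k l (ZMod.gcd_val_eq_of_addOrderOf_eq h)]

theorem stmt2_general (n : ℕ) [NeZero n]
    (S S₁ S₂ : Set (DihedralGroup n)) (hS : S = S₁ ∪ S₂)
    (h1 : (1 : DihedralGroup n) ∉ S) (hSinv : S⁻¹ = S)
    (hS₁ : S₁ ⊆ rSet n) (hS₂ : S₂ ⊆ srSet n)
    (hB₁ : InBooleanAlgebra n S₁)
    (hB₂ : InBooleanAlgebra n ((fun s => DihedralGroup.sr 0 * s) '' S₂)) :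
    IsIntegralGraph (cayleyGraph S) := by
  have hr : ∀ k, r k ∈ S ↔ r k ∈ S₁ := fun k => by
    have : r k ∉ S₂ := fun h => by obtain ⟨_, h⟩ := hS₂ h; cases h
    simp [hS, this]
  have hsr : ∀ k, sr k ∈ S ↔ r k ∈ (fun s => sr 0 * s) '' S₂ := fun k => by
    have : sr k ∉ S₁ := fun h => by obtain ⟨_, h⟩ := hS₁ h; cases h
    simp [hS, this, Set.image_mul_left]
  set F : DihedralGroup n → ℂ := S.indicator 1
  have hFr : ∀ k l, addOrderOf k = addOrderOf l → F (r k) = F (r l) := fun _ _ =>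
    hB₁.indicator_eq_of_addOrderOf_eq hr
  have hFsr : ∀ k l, addOrderOf k = addOrderOf l → F (sr k) = F (sr l) := fun _ _ =>
    hB₂.indicator_eq_of_addOrderOf_eq hsr
  have hF : ∀ x, F x ∈ (⊥ : Subring ℂ) := fun x => by
    by_cases hx : x ∈ S <;> simp [F, hx]
  intro μ hμ
  rw [adjMat_cayleyGraph h1 hSinv, ← Matrix.spectrum_toLin'] at hμ
  obtain ⟨⟨h, u⟩, rfl⟩ := Module.End.spectrum_subset_range_of_span_eigenvectors _ _ _
    (fun p => of_inv_mul_mulVec_eigenvector F (fun k => hFr _ _ (addOrderOf_neg k))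
      (fun k => hFsr _ _ (addOrderOf_neg k)) p.1 (by norm_cast; simp))
    span_range_eigenvector hμ
  obtain ⟨z, hz⟩ := Subring.mem_bot.mp <| add_mem
    ((ZMod.stdAddChar.mulShift h).sum_mul_mem_bot_of_addOrderOf _ (fun _ => hF _) hFr)
    (mul_mem (intCast_mem _ _) <|
      (ZMod.stdAddChar.mulShift h).sum_mul_mem_bot_of_addOrderOf _ (fun _ => hF _) hFsr)
  exact ⟨z, hz.symm⟩

/-- Corollary 3.3. If `S₁ ∈ B(⟨a⟩)` and `bS₂ ∈ B(⟨a⟩)`, then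
`X(D_n,S)` is integral. Here `b = sr 0`. -/
theorem stmt2 (n : ℕ) (hn : 3 ≤ n) [NeZero n]
    (S S₁ S₂ : Set (DihedralGroup n)) (hS : S = S₁ ∪ S₂)
    (h1 : (1 : DihedralGroup n) ∉ S) (hSinv : S⁻¹ = S)
    (hS₁ : S₁ ⊆ rSet n) (hS₂ : S₂ ⊆ srSet n)
    (hB₁ : InBooleanAlgebra n S₁)
    (hB₂ : InBooleanAlgebra n ((fun s => DihedralGroup.sr 0 * s) '' S₂)) :
    IsIntegralGraph (cayleyGraph S) :=
  stmt2_general n S S₁ S₂ hS h1 hSinv hS₁ hS₂ hB₁ hB₂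
end

section
/- Let n = p₁^{α₁}···p_r^{α_r} be odd (each p_i ≥ 3 prime, r ≥ 1), and let S₂ ⊆ b⟨a⟩ ⊆ D_n with |S₂| = t ≥ 2. Suppose the multiset S₂² = {s₁s₂ : (s₁,s₂) ∈ S₂×S₂} equals t*[1] ∪ m₂*[a^{d₂}] for some divisor d₂ of n with d₂ ≠ n and m₂ ≥ 1. Then φ_h(S₂²) is a perfect square for every 1 ≤ h ≤ ⌊(n−1)/2⌋ if and only if n/d₂ = p_i for some 1 ≤ i ≤ r and t = p_i − 1 or t = p_i. Here φ_h(S₂²) = Σ_{x ∈ S₂²} φ_h(x) with multiplicities, where φ_h(a^k) = e^{2πihk/n}. -/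
open DihedralGroup Polynomial

/-!
Write `S₂ = {b a^{k_i}}`. As `b a^i · b a^j = a^{j - i}`, the hypothesis on `S₂²` says that every
difference `k_i - k_j` (`i ≠ j`) lies in the atom `[a^d₂]`, whose elements are `d₂ u` with `u` a
unit modulo `N = n / d₂`. Counting ordered pairs gives `t² = t + m₂ φ(N)`; reducing
`(k_i - k_0) / d₂` modulo a prime `p ∣ N` gives `t ≤ p`; and `φ_h(S₂²) = t + m₂ c_N(h)` with `c_N`
the Ramanujan sum.

If `N` has two distinct prime factors, `φ(N)` is too large for `t ≤ p`. If `N = p^L` with `L ≥ 2`,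
the same bounds force `t = p`, while `c_N(1) = 0` makes `t` a square. For `N = p` prime,
`c_p(1) = -1` turns the condition at `h = 1` into `t (p - t) = z² (p - 1)`, whose only solutions
with `2 ≤ t ≤ p` are `t = p - 1` and `t = p`; conversely these give `t + m₂ c_p(h) ∈ {t², 1, 0}`.
-/

open Finset Complex
open scoped Real

lemma sum_range_exp_mul_div (N h : ℕ) (hN : N ≠ 0) :
    ∑ u ∈ range N, exp (2 * π * I * h * u / N) = if N ∣ h then (N : ℂ) else 0 := by
  set ζ := exp (2 * π * I / N)
  have hζ : IsPrimitiveRoot ζ N := isPrimitiveRoot_exp N hN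
  have hterm (u : ℕ) : exp (2 * π * I * h * u / N) = (ζ ^ h) ^ u := by
    rw [← pow_mul, ← exp_nat_mul]; push_cast; ring_nf
  simp_rw [hterm]
  split_ifs with hdvd
  · simp [(hζ.pow_eq_one_iff_dvd h).2 hdvd]
  · have hne : ζ ^ h ≠ 1 := mt (hζ.pow_eq_one_iff_dvd h).1 hdvd
    rw [geom_sum_eq hne, ← pow_mul, mul_comm, pow_mul, hζ.pow_eq_one, one_pow, sub_self,
      zero_div]

lemma sum_range_mul_filter_dvd {M : Type*} [AddCommMonoid M] (p N : ℕ) (hp : p ≠ 0)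
    (f : ℕ → M) : ∑ u ∈ range (p * N) with p ∣ u, f u = ∑ j ∈ range N, f (p * j) := by
  have hcancel (j : ℕ) : p * j / p = j := Nat.mul_div_cancel_left _ (Nat.pos_of_ne_zero hp)
  refine sum_nbij' (· / p) (p * ·) ?_ ?_ ?_ ?_ ?_ <;> simp only [mem_range, mem_filter]
  · rintro u ⟨hu, j, rfl⟩
    rw [hcancel]
    exact Nat.lt_of_mul_lt_mul_left hu
  · exact fun j hj => ⟨Nat.mul_lt_mul_of_pos_left hj (Nat.pos_of_ne_zero hp), dvd_mul_right p j⟩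
  · rintro u ⟨-, j, rfl⟩
    rw [hcancel]
  · exact fun j _ => hcancel j
  · rintro u ⟨-, j, rfl⟩
    rw [hcancel]

lemma sum_range_mul_filter_not_dvd_exp (p M h : ℕ) (hp : p ≠ 0) (hM : M ≠ 0) :
    ∑ u ∈ range (p * M) with ¬ p ∣ u, exp (2 * π * I * h * u / (p * M : ℕ)) =
      (if p * M ∣ h then ((p * M : ℕ) : ℂ) else 0) - if M ∣ h then (M : ℂ) else 0 := by
  have hdvd : ∑ u ∈ range (p * M) with p ∣ u, exp (2 * π * I * h * u / (p * M : ℕ)) =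
      if M ∣ h then (M : ℂ) else 0 := by
    rw [sum_range_mul_filter_dvd p M hp, ← sum_range_exp_mul_div M h hM]
    refine sum_congr rfl fun j _ => congrArg exp ?_
    have : (p : ℂ) ≠ 0 := by exact_mod_cast hp
    push_cast
    field_simp
  rw [← hdvd, ← sum_range_exp_mul_div _ h (mul_ne_zero hp hM),
    ← sum_filter_add_sum_filter_not (range (p * M)) (p ∣ ·)]
  ring

noncomputable def ramanujanSum (N h : ℕ) : ℂ :=
  ∑ u ∈ range N with N.Coprime u, exp (2 * π * I * h * u / N)

lemma ramanujanSum_prime_pow_succ {p : ℕ} (hp : p.Prime) (L h : ℕ) :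
    ramanujanSum (p ^ (L + 1)) h =
      (if p ^ (L + 1) ∣ h then ((p ^ (L + 1) : ℕ) : ℂ) else 0) -
        if p ^ L ∣ h then ((p ^ L : ℕ) : ℂ) else 0 := by
  have hcop (u : ℕ) : (p ^ (L + 1)).Coprime u ↔ ¬ p ∣ u := by
    rw [Nat.coprime_pow_left_iff L.succ_pos, hp.coprime_iff_not_dvd]
  rw [ramanujanSum, filter_congr fun u _ => hcop u, pow_succ']
  exact sum_range_mul_filter_not_dvd_exp p (p ^ L) h hp.ne_zero (pow_ne_zero L hp.ne_zero)

lemma ramanujanSum_prime {p : ℕ} (hp : p.Prime) (h : ℕ) :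
    ramanujanSum p h = (if p ∣ h then (p : ℂ) else 0) - 1 := by
  simpa using ramanujanSum_prime_pow_succ hp 0 h

lemma ramanujanSum_prime_pow_one {p L : ℕ} (hp : p.Prime) (hL : 2 ≤ L) :
    ramanujanSum (p ^ L) 1 = 0 := by
  obtain ⟨L, rfl⟩ := Nat.exists_eq_add_of_le' hL
  rw [ramanujanSum_prime_pow_succ hp, if_neg, if_neg, sub_zero]
  all_goals
    rw [Nat.dvd_one]
    exact (Nat.one_lt_pow (by omega) hp.one_lt).ne'

lemma sum_filter_gcd_val_eq {M : Type*} [AddCommMonoid M] {n d N : ℕ} [NeZero n]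
    (hn : n = d * N) (f : ℕ → M) :
    ∑ k : ZMod n with k.val.gcd n = d, f k.val = ∑ u ∈ range N with N.Coprime u, f (d * u) := by
  have hd : 0 < d := Nat.pos_of_ne_zero (left_ne_zero_of_mul (hn ▸ NeZero.ne n))
  have hval {u : ℕ} (hu : u < N) : ((d * u : ℕ) : ZMod n).val = d * u :=
    ZMod.val_natCast_of_lt (hn ▸ Nat.mul_lt_mul_of_pos_left hu hd)
  have hgcd (u : ℕ) : (d * u).gcd n = d * u.gcd N := by rw [hn, Nat.gcd_mul_left]
  have hdvd {k : ZMod n} (hk : k.val.gcd n = d) : d * (k.val / d) = k.val :=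
    Nat.mul_div_cancel' (hk ▸ Nat.gcd_dvd_left _ _)
  refine sum_nbij' (fun k => k.val / d) (fun u => ((d * u : ℕ) : ZMod n)) ?_ ?_ ?_ ?_ ?_ <;>
    simp only [mem_filter, mem_univ, true_and, mem_range]
  · intro k hk
    have hg := hgcd (k.val / d)
    rw [hdvd hk, hk] at hg
    refine ⟨Nat.div_lt_of_lt_mul (hn ▸ k.val_lt), ?_⟩
    rw [Nat.coprime_comm, Nat.Coprime]
    exact (Nat.mul_eq_left hd.ne').mp hg.symm
  · rintro u ⟨hu, hcop⟩
    rw [hval hu, hgcd, Nat.coprime_comm.mp hcop, mul_one]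
  · intro k hk
    rw [hdvd hk, ZMod.natCast_zmod_val]
  · rintro u ⟨hu, -⟩
    rw [hval hu, Nat.mul_div_cancel_left _ hd]
  · intro k hk
    rw [hdvd hk]

lemma card_le_of_gcd_sub_val_eq {n d p : ℕ} [NeZero n] (hp : p.Prime) (hdp : d * p ∣ n)
    (K : Set (ZMod n)) (hK : ∀ x ∈ K, ∀ y ∈ K, x ≠ y → (x - y).val.gcd n = d) :
    Nat.card K ≤ p := by
  rcases K.eq_empty_or_nonempty with rfl | ⟨x₀, hx₀⟩
  · simp
  have hdvd {x : ZMod n} (hx : x ∈ K) : d ∣ (x - x₀).val := by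
    rcases eq_or_ne x x₀ with rfl | hne
    · simp
    · exact hK x hx x₀ hx₀ hne ▸ Nat.gcd_dvd_left _ _
  let f : K → ZMod p := fun x => (((x.1 - x₀).val / d : ℕ) : ZMod p)
  have := NeZero.of_pos hp.pos
  suffices Function.Injective f by simpa using Nat.card_le_card_of_injective f this
  -- equal images would give `d * p ∣ gcd ((x - y).val, n) = d`
  rintro ⟨x, hx⟩ ⟨y, hy⟩ hxy
  by_contra hne
  have hgcd := hK x hx y hy (fun h => hne (Subtype.ext h))
  have hd : 0 < d := hgcd ▸ Nat.gcd_pos_of_pos_right _ (Nat.pos_of_ne_zero (NeZero.ne n))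
  have hmod : (((x - x₀).val : ℕ) : ZMod (d * p)) = ((y - x₀).val : ℕ) := by
    rw [ZMod.natCast_eq_natCast_iff, ← Nat.mul_div_cancel' (hdvd hx),
      ← Nat.mul_div_cancel' (hdvd hy)]
    exact Nat.ModEq.mul_left' d ((ZMod.natCast_eq_natCast_iff _ _ _).mp hxy)
  have hzero : (((x - y).val : ℕ) : ZMod (d * p)) = 0 := by
    have := NeZero.of_pos (Nat.mul_pos hd hp.pos)
    rw [← ZMod.cast_eq_val, ← ZMod.castHom_apply (h := hdp),
      show x - y = (x - x₀) - (y - x₀) by ring, map_sub, ZMod.castHom_apply, ZMod.castHom_apply,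
      ZMod.cast_eq_val, ZMod.cast_eq_val, hmod, sub_self]
  have := Nat.le_of_dvd hd (hgcd ▸ Nat.dvd_gcd ((ZMod.natCast_eq_zero_iff _ _).mp hzero) hdp)
  nlinarith [hp.two_le]

section sqMult
variable {n : ℕ} {S : Set (DihedralGroup n)}

lemma sqMult_mul_pos [NeZero n] {x y : DihedralGroup n} (hx : x ∈ S) (hy : y ∈ S) :
    0 < sqMult S (x * y) :=
  have : Nonempty
      {q : DihedralGroup n × DihedralGroup n // q.1 ∈ S ∧ q.2 ∈ S ∧ q.1 * q.2 = x * y} :=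
    ⟨⟨(x, y), hx, hy, rfl⟩⟩
  Nat.card_pos

lemma sqMult_sr_eq_zero (hS : S ⊆ srSet n) (k : ZMod n) : sqMult S (sr k) = 0 := by
  rw [sqMult, Nat.card_eq_zero]
  refine Or.inl ⟨fun ⟨(x, y), hx, hy, hxy⟩ => ?_⟩
  obtain ⟨i, rfl⟩ := hS hx
  obtain ⟨j, rfl⟩ := hS hy
  simp [sr_mul_sr] at hxy

variable (S) in
lemma sum_sqMult [NeZero n] : ∑ x, sqMult S x = Nat.card S ^ 2 := by
  classical
  simp only [sqMult, Nat.card_eq_fintype_card, Fintype.card_subtype, ← filter_filter]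
  rw [← card_eq_sum_card_fiberwise (fun _ _ => mem_univ _), sq, ← card_product]
  congr 1
  ext
  simp

lemma sum_sqMult_r [NeZero n] (hS : S ⊆ srSet n) : ∑ k, sqMult S (r k) = Nat.card S ^ 2 := by
  rw [← sum_sqMult, ← (equivSum (n := n)).symm.sum_comp, Fintype.sum_sum_type]
  simp [equivSum, sqMult_sr_eq_zero hS]

end sqMult

/-- `S² = t*[1] ∪ m*[a^d]` as multisets on `⟨a⟩`. -/
def SqMultEqAtoms {n : ℕ} (S : Set (DihedralGroup n)) (t m d : ℕ) : Prop :=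
  ∀ k : ZMod n, sqMult S (r k) = (if k = 0 then t else 0) + (if Nat.gcd k.val n = d then m else 0)

section SqMultEqAtoms
variable {n : ℕ} [NeZero n] {S : Set (DihedralGroup n)} {t m d : ℕ}

lemma card_sq_eq_add_mul_totient (hsq : SqMultEqAtoms S t m d) (hS : S ⊆ srSet n) {N : ℕ}
    (hn : n = d * N) : Nat.card S ^ 2 = t + m * N.totient := by
  classical
  rw [← sum_sqMult_r hS]
  simp only [hsq _, sum_add_distrib, sum_ite_eq', mem_univ, if_true, ← sum_filter, sum_const,
    smul_eq_mul]
  rw [mul_comm, card_eq_sum_ones, sum_filter_gcd_val_eq hn (fun _ => 1), ← card_eq_sum_ones]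
  rfl

lemma gcd_sub_val_eq (hsq : SqMultEqAtoms S t m d) {i j : ZMod n} (hi : sr i ∈ S)
    (hj : sr j ∈ S) (hij : i ≠ j) : (i - j).val.gcd n = d := by
  have hpos := sqMult_mul_pos hj hi
  rw [sr_mul_sr, hsq, if_neg (sub_ne_zero.mpr hij)] at hpos
  by_contra hne
  rw [if_neg hne] at hpos
  exact hpos.false

lemma card_le_of_prime (hsq : SqMultEqAtoms S t m d) (hS : S ⊆ srSet n) {p : ℕ} (hp : p.Prime)
    (hdp : d * p ∣ n) : Nat.card S ≤ p := by
  have hS' : sr '' (sr ⁻¹' S) = S :=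
    Set.image_preimage_eq_of_subset fun x hx => by obtain ⟨k, rfl⟩ := hS hx; exact ⟨k, rfl⟩
  rw [← hS', Nat.card_image_of_injective (fun _ _ => sr.inj)]
  exact card_le_of_gcd_sub_val_eq hp hdp _ fun i hi j hj hij => gcd_sub_val_eq hsq hi hj hij

lemma sum_sqMult_mul_phi (hsq : SqMultEqAtoms S t m d) {N : ℕ} (hn : n = d * N) (h : ℕ) :
    ∑ k, (sqMult S (r k) : ℂ) * phi n h k = t + m * ramanujanSum N h := by
  classical
  have hd : (d : ℂ) ≠ 0 := by exact_mod_cast left_ne_zero_of_mul (hn ▸ NeZero.ne n)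
  simp only [hsq _, Nat.cast_add, Nat.cast_ite, Nat.cast_zero, add_mul, ite_mul, zero_mul,
    sum_add_distrib, sum_ite_eq', mem_univ, if_true, ← sum_filter, ← mul_sum]
  rw [phi, ZMod.val_zero, Nat.cast_zero, mul_zero, zero_div, Complex.exp_zero, mul_one,
    ramanujanSum]
  refine congrArg (_ + _ * ·)
    ((sum_filter_gcd_val_eq hn fun v => exp (2 * π * I * h * v / n)).trans
      (sum_congr rfl fun u _ => congrArg exp ?_))
  rw [hn]
  push_cast
  field_simp

end SqMultEqAtoms

lemma eq_sub_one_or_eq_of_mul_sub_eq_sq_mul {p t : ℕ} (hp : p.Prime) (ht : 2 ≤ t) (htp : t ≤ p)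
    {z : ℤ} (h : (t : ℤ) * (p - t) = z ^ 2 * (p - 1)) : t = p - 1 ∨ t = p := by
  rcases htp.lt_or_eq with htp | rfl
  swap
  · exact Or.inr rfl
  obtain ⟨w, hw0, hwz⟩ : ∃ w : ℤ, 0 ≤ w ∧ z ^ 2 = w ^ 2 := ⟨|z|, abs_nonneg z, (sq_abs z).symm⟩
  rw [hwz] at h
  have hwp : w < p := by nlinarith
  have hfac : ((t : ℤ) - w) * (t + w) = p * (t - w ^ 2) := by linear_combination -h
  -- as `0 ≤ w < p` and `t < p`, this leaves `w = t` (impossible) or `w = p - t`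
  rcases (Nat.prime_iff_prime_int.mp hp).dvd_or_dvd ⟨_, hfac⟩ with hdvd | hdvd
  · have htw : (t : ℤ) - w = 0 := Int.eq_zero_of_abs_lt_dvd hdvd (abs_lt.mpr ⟨by omega, by omega⟩)
    have : (t : ℤ) * ((p - t) - t * (p - 1)) = 0 := by
      rw [show w = t by omega] at h; linear_combination h
    have : (t : ℤ) * (p - 1) ≤ p - t := by nlinarith
    nlinarith
  · have htw : (t : ℤ) + w - p = 0 :=
      Int.eq_zero_of_abs_lt_dvd (dvd_sub hdvd dvd_rfl) (abs_lt.mpr ⟨by omega, by omega⟩)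
    have : ((p : ℤ) - t) * (t - (p - t) * (p - 1)) = 0 := by
      rw [show w = p - t by omega] at h; linear_combination h
    rcases mul_eq_zero.mp this with h0 | h0
    · omega
    · have : ((p : ℤ) - t) * (p - 1) ≤ p := by nlinarith
      have : (p : ℤ) - t ≤ 1 := by nlinarith
      omega

lemma minFac_sq_le_totient_add_one {N q : ℕ} (hN : Odd N) (hq : q.Prime) (hqN : q ∣ N)
    (hqp : q ≠ N.minFac) : N.minFac ^ 2 ≤ N.totient + 1 := by
  have hN0 : N ≠ 0 := by rintro rfl; exact Nat.not_odd_zero hN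
  have hp : N.minFac.Prime := Nat.minFac_prime (by rintro rfl; exact hq.ne_one (Nat.dvd_one.mp hqN))
  set p := N.minFac
  have hpq : p + 2 ≤ q := by
    have hle : p ≤ q := Nat.minFac_le_of_dvd hq.two_le hqN
    obtain ⟨a, ha⟩ := hN.of_dvd_nat (Nat.minFac_dvd N)
    obtain ⟨b, hb⟩ := hN.of_dvd_nat hqN
    omega
  have hcop : p.Coprime q := (Nat.coprime_primes hp hq).mpr (by omega)
  have hdvd : (p - 1) * (q - 1) ∣ N.totient := by
    rw [← Nat.totient_prime hp, ← Nat.totient_prime hq, ← Nat.totient_mul hcop]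
    exact Nat.totient_dvd_of_dvd (hcop.mul_dvd_of_dvd_of_dvd (Nat.minFac_dvd N) hqN)
  have := Nat.le_of_dvd (Nat.totient_pos.mpr (Nat.pos_of_ne_zero hN0)) hdvd
  have : (p - 1) * (p + 1) ≤ (p - 1) * (q - 1) := Nat.mul_le_mul_left _ (by omega)
  have : (p - 1) * (p + 1) + 1 = p ^ 2 := by
    zify [hp.one_le]
    ring
  omega

lemma eq_minFac_pow_of_sq_eq_add_mul_totient {N t m : ℕ} (hN : Odd N) (ht : 2 ≤ t)
    (hcard : t ^ 2 = t + m * N.totient) (htp : t ≤ N.minFac) :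
    N = N.minFac ^ N.primeFactorsList.length := by
  refine Nat.eq_prime_pow_of_unique_prime_dvd (by rintro rfl; exact Nat.not_odd_zero hN)
    fun {q} hq hqN => ?_
  by_contra hqp
  have hm : m ≠ 0 := by rintro rfl; nlinarith
  have := minFac_sq_le_totient_add_one hN hq hqN hqp
  have : N.totient ≤ m * N.totient := Nat.le_mul_of_pos_left _ (Nat.pos_of_ne_zero hm)
  nlinarith

lemma false_of_prime_pow_of_add_mul_ramanujanSum_eq_sq {p L t m : ℕ} (hp : p.Prime) (hL : 2 ≤ L)
    (ht : 2 ≤ t) (htp : t ≤ p) (hcard : t ^ 2 = t + m * (p ^ L).totient) {z : ℤ}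
    (hz : (t : ℂ) + m * ramanujanSum (p ^ L) 1 = z ^ 2) : False := by
  have hm : m ≠ 0 := by rintro rfl; nlinarith
  -- `t (t - 1) = m φ(p^L) ≥ p (p - 1)` and `t ≤ p` force `t = p`
  have hφ : p * (p - 1) ≤ (p ^ L).totient := by
    rw [Nat.totient_prime_pow hp (by omega)]
    exact Nat.mul_le_mul_right _ (Nat.le_self_pow (by omega) p)
  have htp : t = p := by
    have : (p ^ L).totient ≤ m * (p ^ L).totient := Nat.le_mul_of_pos_left _ (Nat.pos_of_ne_zero hm)
    zify [hp.one_le] at hφ this hcard htp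
    nlinarith
  rw [ramanujanSum_prime_pow_one hp hL, mul_zero, add_zero, htp] at hz
  have : ((z.natAbs ^ 2 : ℕ) : ℤ) = p := by
    rw [Nat.cast_pow, Int.natAbs_sq]
    exact_mod_cast hz.symm
  exact absurd (hp.pow_eq_iff.mp (Nat.cast_injective this)).2 (by norm_num)

lemma prime_of_add_mul_ramanujanSum_eq_sq {N t m : ℕ} (hN : Odd N) (hN1 : 1 < N) (ht : 2 ≤ t)
    (hcard : t ^ 2 = t + m * N.totient) (hle : ∀ p, p.Prime → p ∣ N → t ≤ p) {z : ℤ}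
    (hz : (t : ℂ) + m * ramanujanSum N 1 = z ^ 2) : N.Prime := by
  by_contra hNp
  have hp : N.minFac.Prime := Nat.minFac_prime hN1.ne'
  have htp : t ≤ N.minFac := hle _ hp (Nat.minFac_dvd N)
  have hN := eq_minFac_pow_of_sq_eq_add_mul_totient hN ht hcard htp
  have hL : 2 ≤ N.primeFactorsList.length := by
    by_contra! hL
    interval_cases h : N.primeFactorsList.length
    · rw [pow_zero] at hN; omega
    · exact hNp (hN ▸ (pow_one N.minFac).symm ▸ hp)
  rw [hN] at hcard hz
  exact false_of_prime_pow_of_add_mul_ramanujanSum_eq_sq hp hL ht htp hcard hz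

lemma eq_sub_one_or_eq_of_add_mul_ramanujanSum_eq_sq {p t m : ℕ} (hp : p.Prime) (ht : 2 ≤ t)
    (htp : t ≤ p) (hcard : t ^ 2 = t + m * (p - 1)) {z : ℤ}
    (hz : (t : ℂ) + m * ramanujanSum p 1 = z ^ 2) : t = p - 1 ∨ t = p := by
  rw [ramanujanSum_prime hp, if_neg (hp.one_lt.ne' ∘ Nat.dvd_one.mp), zero_sub] at hz
  have hz' : (t : ℤ) - m = z ^ 2 := by
    exact_mod_cast (by linear_combination hz : ((t : ℤ) - m : ℂ) = z ^ 2)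
  refine eq_sub_one_or_eq_of_mul_sub_eq_sq_mul hp ht htp (z := z) ?_
  zify [hp.one_le] at hcard
  linear_combination -hcard + ((p : ℤ) - 1) * hz'

lemma exists_add_mul_ramanujanSum_eq_sq {p t m : ℕ} (hp : p.Prime) (hcard : t ^ 2 = t + m * (p - 1))
    (ht : t = p - 1 ∨ t = p) (h : ℕ) : ∃ z : ℤ, (t : ℂ) + m * ramanujanSum p h = z ^ 2 := by
  rw [ramanujanSum_prime hp]
  split_ifs
  · refine ⟨t, ?_⟩
    have : ((t ^ 2 : ℕ) : ℂ) = ((t + m * (p - 1) : ℕ) : ℂ) := congrArg _ hcard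
    push_cast [hp.one_le] at this
    linear_combination -this
  have hp2 := hp.two_le
  rcases ht with rfl | rfl
  · have : (m + 1) * (p - 1) = (p - 1) * (p - 1) := by rw [← sq, hcard]; ring
    refine ⟨1, ?_⟩
    rw [← Nat.eq_of_mul_eq_mul_right (by omega) this]
    push_cast
    ring
  · have : m * (t - 1) = t * (t - 1) := by
      zify [hp.one_le] at hcard ⊢
      linear_combination -hcard
    refine ⟨0, ?_⟩
    rw [Nat.eq_of_mul_eq_mul_right (by omega) this]
    ring

theorem stmt6_general (n : ℕ) (hodd : Odd n) [NeZero n]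
    (S₂ : Set (DihedralGroup n)) (hS₂ : S₂ ⊆ srSet n)
    (t m₂ d₂ : ℕ) (ht : t = Nat.card S₂) (ht2 : 2 ≤ t)
    (hd₂ : d₂ ∣ n) (hd₂n : d₂ ≠ n)
    (hsq : ∀ k : ZMod n, sqMult S₂ (DihedralGroup.r k) =
      (if k = 0 then t else 0) + (if Nat.gcd k.val n = d₂ then m₂ else 0)) :
    (∀ h : ℕ, 1 ≤ h → h ≤ (n - 1) / 2 →
        ∃ z : ℤ, ∑ k : ZMod n, (sqMult S₂ (DihedralGroup.r k) : ℂ) * phi n h k = (z : ℂ) ^ 2) ↔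
      ∃ p : ℕ, p.Prime ∧ p ∣ n ∧ n / d₂ = p ∧ (t = p - 1 ∨ t = p) := by
  obtain ⟨N, hn⟩ := hd₂
  have hNn : N ∣ n := Dvd.intro_left d₂ hn.symm
  have hd₂0 : 0 < d₂ := Nat.pos_of_ne_zero (left_ne_zero_of_mul (hn ▸ NeZero.ne n))
  have hN1 : 1 < N := by
    have : N ≠ 1 := by rintro rfl; exact hd₂n (by rw [hn, mul_one])
    have := right_ne_zero_of_mul (hn ▸ NeZero.ne n)
    omega
  have hcard := card_sq_eq_add_mul_totient hsq hS₂ hn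
  rw [← ht] at hcard
  have hle (p : ℕ) (hp : p.Prime) (hpN : p ∣ N) : t ≤ p := by
    rw [ht]; exact card_le_of_prime hsq hS₂ hp (hn ▸ mul_dvd_mul_left d₂ hpN)
  have hnN : n / d₂ = N := by rw [hn, Nat.mul_div_cancel_left N hd₂0]
  rw [hnN]
  simp only [sum_sqMult_mul_phi hsq hn]
  constructor
  · intro hsqs
    obtain ⟨z, hz⟩ := hsqs 1 le_rfl (by have := Nat.le_of_dvd (NeZero.pos n) hNn; grind)
    have hNp := prime_of_add_mul_ramanujanSum_eq_sq (hodd.of_dvd_nat hNn) hN1 ht2 hcard hle hz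
    rw [Nat.totient_prime hNp] at hcard
    exact ⟨N, hNp, hNn, rfl,
      eq_sub_one_or_eq_of_add_mul_ramanujanSum_eq_sq hNp ht2 (hle N hNp dvd_rfl) hcard hz⟩
  · rintro ⟨p, hp, -, rfl, htp⟩ h - -
    rw [Nat.totient_prime hp] at hcard
    exact exists_add_mul_ramanujanSum_eq_sq hp hcard htp h

/-- Lemma 4.2. Let `n` be odd (a product of primes `≥ 3`), `S₂ ⊆ b⟨a⟩`
with `|S₂| = t ≥ 2`, and suppose `S₂² = t*[1] ∪ m₂*[a^{d₂}]` with `d₂ ∣ n`, `d₂ ≠ n`,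
`m₂ ≥ 1`. Then `φ_h(S₂²)` is the square of an integer for every `1 ≤ h ≤ ⌊(n−1)/2⌋`
iff `n/d₂ = p` for a prime `p ∣ n` and `t = p − 1` or `t = p`. -/
theorem stmt6 (n : ℕ) (hodd : Odd n) (hn : 1 < n) [NeZero n]
    (S₂ : Set (DihedralGroup n)) (hS₂ : S₂ ⊆ srSet n)
    (t m₂ d₂ : ℕ) (ht : t = Nat.card S₂) (ht2 : 2 ≤ t) (hm₂ : 1 ≤ m₂)
    (hd₂ : d₂ ∣ n) (hd₂n : d₂ ≠ n)
    (hsq : ∀ k : ZMod n, sqMult S₂ (DihedralGroup.r k) =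
      (if k = 0 then t else 0) + (if Nat.gcd k.val n = d₂ then m₂ else 0)) :
    (∀ h : ℕ, 1 ≤ h → h ≤ (n - 1) / 2 →
        ∃ z : ℤ, ∑ k : ZMod n, (sqMult S₂ (DihedralGroup.r k) : ℂ) * phi n h k = (z : ℂ) ^ 2) ↔
      ∃ p : ℕ, p.Prime ∧ p ∣ n ∧ n / d₂ = p ∧ (t = p - 1 ∨ t = p) :=
  stmt6_general n hodd S₂ hS₂ t m₂ d₂ ht ht2 hd₂ hd₂n hsq
end

section
/- Let n ≥ 3, let D_n = ⟨a,b | a^n = b^2 = 1, bab = a^{-1}⟩, and let S = S₁ ∪ S₂ ⊆ D_n∖{1} with S = S^{-1}, where S₁ ⊆ ⟨a⟩ and S₂ = {ba^i} is a singleton for some 0 ≤ i ≤ n−1. If S₁ is a union of atoms of the Boolean algebra B(⟨a⟩), then the Cayley graph X(D_n,S) is integral. -/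
open DihedralGroup Polynomial

/-!
Let `J = {j | a^j ∈ S₁}` and, for an additive character `ψ` of `ZMod n`, `ψ(J) = ∑_{j ∈ J} ψ j`.
For `σ = ±1`, the function equal to `ψ` on `⟨a⟩` and to `k ↦ σ ψ(i - k)` on `b⟨a⟩` is an
eigenvector of the adjacency matrix with eigenvalue `ψ(J) + σ` (using `J = -J`, which comes from
`S = S⁻¹`), and these functions span all functions on `D_n`, so they exhaust the spectrum.
Finally `ψ(J)` is an integer because `J` is a union of classes of generators of cyclic subgroups:
the sum of `ψ` over a subgroup is `0` or its order, and induction over the subgroup lattice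
isolates the sum over the generators of each subgroup.
-/

open scoped Matrix
open Finset

namespace AddChar

variable {G R : Type*} [AddCommGroup G] [Fintype G] [CommRing R] [IsDomain R]

open scoped Classical in
theorem sum_addSubgroup_mem_range_intCast (ψ : AddChar G R) (H : AddSubgroup G) :
    ∑ g ∈ univ.filter (· ∈ H), ψ g ∈ (Int.castRingHom R).range := by
  rw [sum_subtype _ (p := (· ∈ H)) (fun g => by simp),
    show ∑ g : H, ψ g = ∑ g, ψ.compAddMonoidHom H.subtype g from rfl, sum_eq_ite]
  split_ifs
  exacts [⟨Fintype.card H, by simp⟩, zero_mem _]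

open scoped Classical in
theorem sum_generators_mem_range_intCast (ψ : AddChar G R) (H : AddSubgroup G) :
    ∑ g ∈ univ.filter (AddSubgroup.zmultiples · = H), ψ g ∈ (Int.castRingHom R).range := by
  induction H using WellFoundedLT.induction with
  | _ H ih =>
  have : Fintype (AddSubgroup G) := Fintype.ofFinite _
  have hmem : H ∈ univ.filter (· ≤ H) := by simp
  have hfiber : ∀ K ∈ univ.filter (· ≤ H),
      ∑ g ∈ univ.filter (· ∈ H) with AddSubgroup.zmultiples g = K, ψ g
        = ∑ g ∈ univ.filter (AddSubgroup.zmultiples · = K), ψ g := by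
    intro K hK
    refine sum_congr (Finset.ext fun g => ?_) fun _ _ => rfl
    simp only [mem_filter, mem_univ, true_and, and_iff_right_iff_imp]
    rintro rfl
    simpa [AddSubgroup.zmultiples_le] using hK
  have hsplit := sum_fiberwise_of_maps_to (s := univ.filter (· ∈ H)) (t := univ.filter (· ≤ H))
    (g := AddSubgroup.zmultiples)
    (fun g hg => by simpa [AddSubgroup.zmultiples_le] using hg) ψ
  rw [sum_congr rfl hfiber, ← add_sum_erase _ _ hmem] at hsplit
  rw [eq_sub_of_add_eq hsplit]
  refine sub_mem (ψ.sum_addSubgroup_mem_range_intCast H) (sum_mem fun K hK => ih K ?_)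
  simp only [mem_erase, mem_filter, mem_univ, true_and] at hK
  exact lt_of_le_of_ne hK.2 hK.1

theorem sum_mem_range_intCast_of_zmultiples_eq (ψ : AddChar G R) (J : Finset G)
    (hJ : ∀ g h, AddSubgroup.zmultiples g = AddSubgroup.zmultiples h → (g ∈ J ↔ h ∈ J)) :
    ∑ g ∈ J, ψ g ∈ (Int.castRingHom R).range := by
  classical
  rw [← sum_fiberwise_of_maps_to (t := J.image AddSubgroup.zmultiples)
    (fun g hg => mem_image_of_mem _ hg)]
  refine sum_mem fun K hK => ?_
  obtain ⟨g, hg, rfl⟩ := mem_image.mp hK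
  convert ψ.sum_generators_mem_range_intCast (AddSubgroup.zmultiples g) using 2
  ext h
  simp only [mem_filter, mem_univ, true_and, and_iff_right_iff_imp]
  exact fun hgh => (hJ g h hgh.symm).mp hg

end AddChar

theorem ZMod.gcd_val_eq_of_zmultiples_eq {n : ℕ} [NeZero n] {j l : ZMod n}
    (h : AddSubgroup.zmultiples j = AddSubgroup.zmultiples l) :
    Nat.gcd j.val n = Nat.gcd l.val n := by
  have hord : n / n.gcd j.val = n / n.gcd l.val := by
    rw [← ZMod.addOrderOf_coe _ (NeZero.ne n), ← ZMod.addOrderOf_coe _ (NeZero.ne n),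
      ZMod.natCast_zmod_val, ZMod.natCast_zmod_val, ← Nat.card_zmultiples,
      ← Nat.card_zmultiples, h]
  rw [Nat.gcd_comm, Nat.gcd_comm l.val,
    ← Nat.div_div_self (Nat.gcd_dvd_left n j.val) (NeZero.ne n), hord,
    Nat.div_div_self (Nat.gcd_dvd_left n l.val) (NeZero.ne n)]

theorem Matrix.spectrum_subset_of_span_eigenvectors {V : Type*} [Fintype V] [DecidableEq V]
    {M : Matrix V V ℂ} {T : Set ℂ} {s : Set (V → ℂ)} (hs : Submodule.span ℂ s = ⊤)
    (hev : ∀ v ∈ s, ∃ c ∈ T, M *ᵥ v = c • v) : spectrum ℂ M ⊆ T := by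
  intro μ hμ
  by_contra hμT
  rw [← AlgEquiv.spectrum_eq (toLinAlgEquiv' : Matrix V V ℂ ≃ₐ[ℂ] _),
    ← Module.End.hasEigenvalue_iff_mem_spectrum] at hμ
  have hspan : Submodule.span ℂ s ≤ ⨆ c ≠ μ, Module.End.eigenspace (toLinAlgEquiv' M) c := by
    rw [Submodule.span_le]
    intro v hv
    obtain ⟨c, hcT, hc⟩ := hev v hv
    refine Submodule.mem_iSup_of_mem c (Submodule.mem_iSup_of_mem (by rintro rfl; exact hμT hcT)
      (Module.End.mem_eigenspace_iff.mpr hc))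
  have hdisj := Module.End.eigenspaces_iSupIndep (toLinAlgEquiv' M) μ
  rw [hs, top_le_iff] at hspan
  rw [hspan, disjoint_top] at hdisj
  exact hμ hdisj

theorem adjMat_cayleyGraph_mulVec {G : Type*} [Group G] [Fintype G]
    {S : Set G} [DecidablePred (· ∈ S)] (h1 : 1 ∉ S) (hS : S⁻¹ = S) (f : G → ℂ) (x : G) :
    (adjMat (cayleyGraph S) *ᵥ f) x = ∑ s ∈ univ.filter (· ∈ S), f (x * s) := by
  have hadj : ∀ y, (cayleyGraph S).Adj x y ↔ x⁻¹ * y ∈ S := by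
    intro y
    rw [cayleyGraph, SimpleGraph.fromRel_adj, ← Set.inv_mem_inv, hS, mul_inv_rev, inv_inv,
      or_self, and_iff_right_iff_imp]
    rintro hxy rfl
    exact h1 (by simpa using hxy)
  simp only [Matrix.mulVec, dotProduct, adjMat, Matrix.of_apply, hadj, ite_mul, one_mul,
    zero_mul, sum_filter]
  exact Fintype.sum_equiv (Equiv.mulLeft x⁻¹) _ _ fun y => by simp

namespace DihedralGroup

variable {n : ℕ}

theorem sum_eq_sum_r_add_sum_sr [NeZero n] {M : Type*} [AddCommMonoid M]
    (f : DihedralGroup n → M) : ∑ x, f x = ∑ k, f (r k) + ∑ k, f (sr k) :=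
  (Fintype.sum_equiv equivSum _ (Sum.elim (f ∘ r) (f ∘ sr)) (by rintro (k | k) <;> rfl)).trans
    (Fintype.sum_sum_type _)

def elimₗ : ((ZMod n → ℂ) × (ZMod n → ℂ)) →ₗ[ℂ] (DihedralGroup n → ℂ) where
  toFun p := fun
    | r k => p.1 k
    | sr k => p.2 k
  map_add' _ _ := by ext (k | k) <;> rfl
  map_smul' _ _ := by ext (k | k) <;> rfl

@[simp] theorem elimₗ_r (p : (ZMod n → ℂ) × (ZMod n → ℂ)) (k : ZMod n) :
    elimₗ p (r k) = p.1 k := rfl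

@[simp] theorem elimₗ_sr (p : (ZMod n → ℂ) × (ZMod n → ℂ)) (k : ZMod n) :
    elimₗ p (sr k) = p.2 k := rfl

def cayleyEigenvector (i : ZMod n) (ψ : AddChar (ZMod n) ℂ) (σ : ℂ) : DihedralGroup n → ℂ :=
  elimₗ (ψ, fun k => σ * ψ (i - k))

theorem sum_cayleyEigenvector_mul {J : Finset (ZMod n)} (hJ : ∀ j, -j ∈ J ↔ j ∈ J)
    (i : ZMod n) (ψ : AddChar (ZMod n) ℂ) {σ : ℂ} (hσ : σ * σ = 1) (x : DihedralGroup n) :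
    ∑ j ∈ J, cayleyEigenvector i ψ σ (x * r j) + cayleyEigenvector i ψ σ (x * sr i)
      = (∑ j ∈ J, ψ j + σ) * cayleyEigenvector i ψ σ x := by
  cases x with
  | r k =>
    simp only [cayleyEigenvector, r_mul_r, r_mul_sr, elimₗ_r, elimₗ_sr, sub_sub_cancel,
      AddChar.map_add_eq_mul, ← mul_sum]
    ring
  | sr k =>
    have hneg : ∑ j ∈ J, ψ (-j) = ∑ j ∈ J, ψ j :=
      sum_nbij' Neg.neg Neg.neg (fun j hj => (hJ j).mpr hj) (fun j hj => (hJ j).mpr hj)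
        (fun j _ => neg_neg j) (fun j _ => neg_neg j) (fun j _ => rfl)
    have hsplit : ∀ j, i - (k + j) = (i - k) + -j := fun j => by ring
    simp only [cayleyEigenvector, sr_mul_r, sr_mul_sr, elimₗ_r, elimₗ_sr, hsplit,
      AddChar.map_add_eq_mul, ← mul_sum, hneg]
    linear_combination (-ψ (i - k)) * hσ

theorem span_cayleyEigenvector [NeZero n] (i : ZMod n) :
    Submodule.span ℂ (Set.image2 (cayleyEigenvector i) Set.univ {1, -1}) = ⊤ := by
  set P := Submodule.span ℂ (Set.image2 (cayleyEigenvector i) Set.univ {1, -1})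
  have hW : ∀ ψ σ, σ = 1 ∨ σ = -1 → cayleyEigenvector i ψ σ ∈ P := fun ψ σ hσ =>
    Submodule.subset_span (Set.mem_image2_of_mem (Set.mem_univ ψ) hσ)
  have hchar : ∀ L : (ZMod n → ℂ) →ₗ[ℂ] (DihedralGroup n → ℂ),
      (∀ ψ : AddChar (ZMod n) ℂ, L ψ ∈ P) → ∀ u, L u ∈ P := by
    intro L hL u
    have hle : Submodule.span ℂ (Set.range (AddChar.complexBasis (ZMod n))) ≤ P.comap L := by
      rw [Submodule.span_le]
      rintro _ ⟨ψ, rfl⟩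
      simpa [AddChar.complexBasis_apply] using hL ψ
    rw [(AddChar.complexBasis (ZMod n)).span_eq, top_le_iff] at hle
    exact Submodule.mem_comap.mp (hle ▸ Submodule.mem_top)
  have hrot : ∀ u, elimₗ (u, 0) ∈ P := hchar (elimₗ ∘ₗ LinearMap.inl ℂ _ _) fun ψ => by
    convert P.smul_mem (1 / 2 : ℂ) (P.add_mem (hW ψ 1 (.inl rfl)) (hW ψ (-1) (.inr rfl)))
      using 1
    ext (k | k)
    · simp [cayleyEigenvector]
      ring
    · simp [cayleyEigenvector]
  have hrefl : ∀ v, elimₗ (0, v) ∈ P := hchar (elimₗ ∘ₗ LinearMap.inr ℂ _ _) fun ψ => by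
    convert P.smul_mem (ψ i / 2 : ℂ)
      (P.sub_mem (hW ψ⁻¹ 1 (.inl rfl)) (hW ψ⁻¹ (-1) (.inr rfl))) using 1
    ext (k | k)
    · simp [cayleyEigenvector]
    · have hi : ψ i * ψ (-i) = 1 := by
        rw [← AddChar.map_add_eq_mul, add_neg_cancel, AddChar.map_zero_eq_one]
      simp only [cayleyEigenvector, LinearMap.comp_apply, LinearMap.inr_apply, elimₗ_sr,
        Pi.smul_apply, Pi.sub_apply, smul_eq_mul, AddChar.inv_apply, neg_sub, sub_eq_add_neg k,
        AddChar.map_add_eq_mul]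
      linear_combination (-ψ k) * hi
  rw [eq_top_iff, ← (Pi.basisFun ℂ (DihedralGroup n)).span_eq, Submodule.span_le]
  rintro _ ⟨x, rfl⟩
  rw [SetLike.mem_coe, Pi.basisFun_apply]
  cases x with
  | r m => convert hrot (Pi.single m 1) using 1; ext (k | k) <;> simp [Pi.single_apply]
  | sr m => convert hrefl (Pi.single m 1) using 1; ext (k | k) <;> simp [Pi.single_apply]

theorem spectrum_adjMat_cayleyGraph_subset [NeZero n] {S : Set (DihedralGroup n)}
    (h1 : 1 ∉ S) (hS : S⁻¹ = S) {J : Finset (ZMod n)} {i : ZMod n}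
    (hr : ∀ j, r j ∈ S ↔ j ∈ J) (hsr : ∀ k, sr k ∈ S ↔ k = i) :
    spectrum ℂ (adjMat (cayleyGraph S)) ⊆
      Set.image2 (fun ψ σ => ∑ j ∈ J, (ψ : AddChar (ZMod n) ℂ) j + σ) Set.univ {1, -1} := by
  classical
  have hJ : ∀ j, -j ∈ J ↔ j ∈ J := fun j => by rw [← hr, ← hr, ← inv_r, ← Set.mem_inv, hS]
  refine Matrix.spectrum_subset_of_span_eigenvectors (span_cayleyEigenvector i) ?_
  rintro _ ⟨ψ, -, σ, hσ, rfl⟩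
  refine ⟨_, Set.mem_image2_of_mem (Set.mem_univ ψ) hσ, funext fun x => ?_⟩
  have hσσ : σ * σ = 1 := by rcases hσ with rfl | rfl <;> norm_num
  rw [adjMat_cayleyGraph_mulVec h1 hS, sum_filter, sum_eq_sum_r_add_sum_sr]
  simp only [hr, hsr, sum_ite_mem, univ_inter, sum_ite_eq', mem_univ, if_true,
    sum_cayleyEigenvector_mul hJ i ψ hσσ]
  rfl

end DihedralGroup

theorem stmt7_general (n : ℕ) [NeZero n]
    (S S₁ S₂ : Set (DihedralGroup n)) (hS : S = S₁ ∪ S₂)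
    (h1 : (1 : DihedralGroup n) ∉ S) (hSinv : S⁻¹ = S)
    (i : ZMod n) (hS₂ : S₂ = {DihedralGroup.sr i})
    (hB₁ : InBooleanAlgebra n S₁) :
    IsIntegralGraph (cayleyGraph S) := by
  classical
  set J := univ.filter (r · ∈ S₁)
  have hsr : ∀ k, sr k ∈ S ↔ k = i := fun k => by
    have : sr k ∉ S₁ := fun hk => by obtain ⟨_, h⟩ := hB₁.1 hk; cases h
    simp [hS, hS₂, this]
  have hspec := spectrum_adjMat_cayleyGraph_subset h1 hSinv (J := J) (by simp [J, hS, hS₂]) hsr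
  intro μ hμ
  obtain ⟨ψ, -, σ, hσ, rfl⟩ := hspec hμ
  obtain ⟨z, hz⟩ := ψ.sum_mem_range_intCast_of_zmultiples_eq J fun g h hgh => by
    simpa [J] using hB₁.2 g h (ZMod.gcd_val_eq_of_zmultiples_eq hgh)
  rw [eq_intCast] at hz
  rcases hσ with rfl | rfl
  exacts [⟨z + 1, by push_cast [hz]; rfl⟩, ⟨z - 1, by push_cast [hz]; ring⟩]

/-- Lemma 4.1. If `S₁ ∈ B(⟨a⟩)` and `S₂ = {ba^i}` is a singleton, then
`X(D_n,S)` is integral. -/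
theorem stmt7 (n : ℕ) (hn : 3 ≤ n) [NeZero n]
    (S S₁ S₂ : Set (DihedralGroup n)) (hS : S = S₁ ∪ S₂)
    (h1 : (1 : DihedralGroup n) ∉ S) (hSinv : S⁻¹ = S)
    (hS₁ : S₁ ⊆ rSet n) (i : ZMod n) (hS₂ : S₂ = {DihedralGroup.sr i})
    (hB₁ : InBooleanAlgebra n S₁) :
    IsIntegralGraph (cayleyGraph S) :=
  stmt7_general n S S₁ S₂ hS h1 hSinv i hS₂ hB₁
end

section
/- Let m be an odd positive integer and let D_{2m} = ⟨a,b | a^{2m} = b^2 = 1, bab = a^{-1}⟩ be the dihedral group of order 4m. Let S₁ = {a^m}, S₂ = b⟨a²⟩ = {ba^{2k} : 0 ≤ k ≤ m−1}, and S = S₁ ∪ S₂. Then the Cayley graph X(D_{2m},S) is connected and integral. -/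
open DihedralGroup Polynomial

/-!
With `z = a^m` and `π : D_{2m} → D_{2m}/⟨a²⟩ ≅ D_2`, the connection set is `S = {z} ∪ π⁻¹{b}`.
Its adjacency matrix is `P + B`, where `P`, the permutation matrix of the central involution `z`,
is an involution commuting with `B`, and `B` is pulled back along `π` from the permutation matrix
of `b` on `D_2`. All fibres of `π` have the same size `m`, so `B³ = m²B`. If `v` is an eigenvector
of `P + B` for `μ`, then either `v + Pv ≠ 0` is fixed by `P` or `Pv = -v`; either way `μ ∓ 1` is an
eigenvalue of `B`, hence lies in `{0, ±m}`. As `m` is odd, `a = a^m · b · ba^{m+1}` with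
`ba^{m+1} ∈ S`, so `S` generates `D_{2m}` and the graph is connected.
-/

open Matrix Finset

section CayleyGraph

variable {G : Type*} [Group G]

theorem cayleyGraph_reachable_mul (S : Set G) (x : G) {s : G} (hs : s ∈ S) :
    (cayleyGraph S).Reachable x (x * s) := by
  by_cases h : x = x * s
  · rw [← h]
  · exact SimpleGraph.Adj.reachable ⟨h, Or.inl (by simpa using hs)⟩

theorem cayleyGraph_connected_of_closure_eq_top {S : Set G} (hS : Subgroup.closure S = ⊤) :
    (cayleyGraph S).Connected := by
  have reach (g : G) : (cayleyGraph S).Reachable 1 g := by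
    induction (hS ▸ Subgroup.mem_top g : g ∈ Subgroup.closure S)
      using Subgroup.closure_induction_right with
    | one => rfl
    | mul_right x _ s hs ih => exact ih.trans (cayleyGraph_reachable_mul S x hs)
    | mul_inv_cancel x _ s hs ih =>
      have h := (cayleyGraph_reachable_mul S (x * s⁻¹) hs).symm
      rw [inv_mul_cancel_right] at h
      exact ih.trans h
  exact (SimpleGraph.connected_iff _).2 ⟨fun x y => (reach x).symm.trans (reach y), ⟨1⟩⟩

theorem cayleyGraph_adj_iff {S : Set G} (hS : ∀ s ∈ S, s⁻¹ ∈ S) (h1 : 1 ∉ S) (x y : G) :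
    (cayleyGraph S).Adj x y ↔ x⁻¹ * y ∈ S := by
  refine ⟨?_, fun h => ⟨?_, Or.inl h⟩⟩
  · rintro ⟨-, h | h⟩
    · exact h
    · simpa using hS _ h
  · rintro rfl
    exact h1 (by simpa using h)

end CayleyGraph

section CayleyMatrix

variable {G R : Type*} [Group G]

def cayleyMatrix (f : G → R) : Matrix G G R := Matrix.of fun x y => f (x⁻¹ * y)

theorem cayleyMatrix_add [Add R] (f g : G → R) :
    cayleyMatrix (f + g) = cayleyMatrix f + cayleyMatrix g := rfl

theorem cayleyMatrix_comp {Q : Type*} [Group Q] (φ : G →* Q) (f : Q → R) :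
    cayleyMatrix (f ∘ φ) = (cayleyMatrix f).submatrix φ φ := by
  ext x y
  simp [cayleyMatrix]

variable [Semiring R] [Fintype G]

theorem cayleyMatrix_mul (f g : G → R) :
    cayleyMatrix f * cayleyMatrix g = cayleyMatrix fun t => ∑ w, f w * g (w⁻¹ * t) := by
  ext x y
  exact Fintype.sum_equiv (Equiv.mulLeft x⁻¹) _ _ fun z => by simp [cayleyMatrix, mul_assoc]

variable [DecidableEq G]

theorem cayleyMatrix_single_mul (z : G) (g : G → R) :
    cayleyMatrix (Pi.single z 1) * cayleyMatrix g = cayleyMatrix fun t => g (z⁻¹ * t) := by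
  simp [cayleyMatrix_mul, Pi.single_apply]

theorem cayleyMatrix_mul_single (z : G) (g : G → R) :
    cayleyMatrix g * cayleyMatrix (Pi.single z 1) = cayleyMatrix fun t => g (t * z⁻¹) := by
  have (w t : G) : w⁻¹ * t = z ↔ w = t * z⁻¹ := by
    rw [inv_mul_eq_iff_eq_mul, eq_mul_inv_iff_mul_eq, eq_comm]
  simp [cayleyMatrix_mul, Pi.single_apply, this]

theorem cayleyMatrix_single_mul_self {z : G} (hz : z * z = 1) :
    cayleyMatrix (Pi.single z (1 : R)) * cayleyMatrix (Pi.single z 1) = 1 := by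
  rw [cayleyMatrix_single_mul]
  ext x y
  have : z⁻¹ * (x⁻¹ * y) = z ↔ x = y := by rw [inv_mul_eq_iff_eq_mul, hz, inv_mul_eq_one]
  simp [cayleyMatrix, Pi.single_apply, one_apply, this]

theorem commute_cayleyMatrix_single_of_mem_center {z : G} (hz : z ∈ Subgroup.center G)
    (g : G → R) : Commute (cayleyMatrix (Pi.single z 1)) (cayleyMatrix g) := by
  rw [Commute, SemiconjBy, cayleyMatrix_single_mul, cayleyMatrix_mul_single]
  simp_rw [Subgroup.mem_center_iff.1 (inv_mem hz)]

end CayleyMatrix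

theorem adjMat_cayleyGraph_s8 {G : Type*} [Group G] [Fintype G] {S : Set G}
    (hS : ∀ s ∈ S, s⁻¹ ∈ S) (h1 : 1 ∉ S) :
    adjMat (cayleyGraph S) = cayleyMatrix (S.indicator 1) := by
  classical
  ext x y
  simp [adjMat, cayleyMatrix, Set.indicator_apply, cayleyGraph_adj_iff hS h1]

theorem Matrix.submatrix_mul_submatrix_of_card_fiber {α β R : Type*} [Fintype α] [Fintype β]
    [DecidableEq β] [Semiring R] {π : α → β} {c : ℕ}
    (hπ : ∀ b, #{a | π a = b} = c) (M N : Matrix β β R) :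
    M.submatrix π π * N.submatrix π π = c • (M * N).submatrix π π := by
  ext i j
  simp only [mul_apply, submatrix_apply, smul_apply, smul_sum]
  rw [← sum_fiberwise univ π]
  refine sum_congr rfl fun b _ => ?_
  rw [sum_congr rfl fun a ha => by rw [(mem_filter.1 ha).2], sum_const, hπ]

theorem MonoidHom.card_fiber_eq_of_surjective {G Q : Type*} [Group G] [Fintype G] [Group Q]
    [DecidableEq Q] {φ : G →* Q} (hφ : Function.Surjective φ) (q q' : Q) :
    #{a | φ a = q} = #{a | φ a = q'} := by
  simpa [Set.preimage, Nat.card_eq_fintype_card, Fintype.card_subtype] using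
    Nat.card_congr (φ.fiberEquivOfSurjective hφ q q')

theorem cayleyMatrix_single_comp_pow_three {G Q R : Type*} [Group G] [Fintype G] [DecidableEq G]
    [Group Q] [Fintype Q] [DecidableEq Q] [Semiring R] {φ : G →* Q} (hφ : Function.Surjective φ)
    {q : Q} (hq : q * q = 1) :
    cayleyMatrix (Pi.single q (1 : R) ∘ φ) ^ 3 =
      (#{a | φ a = 1} : R) ^ 2 • cayleyMatrix (Pi.single q (1 : R) ∘ φ) := by
  have hfib (b : Q) := MonoidHom.card_fiber_eq_of_surjective hφ b 1
  rw [cayleyMatrix_comp, pow_succ, sq, submatrix_mul_submatrix_of_card_fiber hfib,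
    cayleyMatrix_single_mul_self hq, smul_mul, submatrix_mul_submatrix_of_card_fiber hfib,
    smul_smul, one_mul, sq, ← Nat.cast_mul, Nat.cast_smul_eq_nsmul]

theorem Module.End.HasEigenvalue.sub_one_or_add_one_of_add {R M : Type*} [CommRing R]
    [AddCommGroup M] [Module R M] {p b : Module.End R M} (hp : p * p = 1) (hpb : Commute p b)
    {μ : R} (h : (p + b).HasEigenvalue μ) :
    b.HasEigenvalue (μ - 1) ∨ b.HasEigenvalue (μ + 1) := by
  obtain ⟨v, hv⟩ := h.exists_hasEigenvector
  have hpp : p (p v) = v := by rw [← Module.End.mul_apply, hp, Module.End.one_apply]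
  have hv' : p v + b v = μ • v := hv.apply_eq_smul
  have hpv : p (p v) + b (p v) = μ • p v := by
    rw [← LinearMap.add_apply, ← Module.End.mul_apply, ← ((Commute.refl p).add_right hpb).eq,
      Module.End.mul_apply, hv.apply_eq_smul, map_smul]
  by_cases hu : v + p v = 0
  · refine Or.inr (Module.End.hasEigenvalue_of_hasEigenvector
      ⟨Module.End.mem_eigenspace_iff.2 ?_, hv.2⟩)
    linear_combination (norm := module) hv' - hu
  · refine Or.inl (Module.End.hasEigenvalue_of_hasEigenvector
      ⟨Module.End.mem_eigenspace_iff.2 ?_, hu⟩)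
    rw [map_add]
    linear_combination (norm := module) hv' + hpv - hpp

theorem Module.End.HasEigenvalue.eq_zero_or_eq_or_eq_neg {K V : Type*} [Field K]
    [AddCommGroup V] [Module K V] {b : Module.End K V} {c μ : K} (hb : b ^ 3 = c ^ 2 • b)
    (h : b.HasEigenvalue μ) : μ = 0 ∨ μ = c ∨ μ = -c := by
  obtain ⟨v, hv⟩ := h.exists_hasEigenvector
  have hv3 := congr($hb v)
  rw [hv.pow_apply, LinearMap.smul_apply, hv.apply_eq_smul, smul_smul, ← sub_eq_zero,
    ← sub_smul] at hv3
  have : μ * (μ ^ 2 - c ^ 2) = 0 := by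
    linear_combination (smul_eq_zero.1 hv3).resolve_right hv.2
  rcases mul_eq_zero.1 this with h | h
  · exact Or.inl h
  · exact Or.inr (sq_eq_sq_iff_eq_or_eq_neg.1 (sub_eq_zero.1 h))

theorem adjMat_cayleyGraph_union_preimage {G Q : Type*} [Group G] [Fintype G] [DecidableEq G]
    [Group Q] [DecidableEq Q] {φ : G →* Q} {z : G} (hz2 : z * z = 1) (hz1 : z ≠ 1) {q : Q}
    (hq2 : q * q = 1) (hq1 : q ≠ 1) (hzq : φ z ≠ q) :
    adjMat (cayleyGraph ({z} ∪ φ ⁻¹' {q})) =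
      cayleyMatrix (Pi.single z 1) + cayleyMatrix (Pi.single q 1 ∘ φ) := by
  have hind : ({z} ∪ φ ⁻¹' {q}).indicator (1 : G → ℂ) = Pi.single z 1 + Pi.single q 1 ∘ φ := by
    ext g
    by_cases hg : g = z
    · simp [hg, hzq]
    · classical
      simp [Set.indicator_apply, Pi.single_apply, hg]
  have hsymm (s) (hs : s ∈ ({z} ∪ φ ⁻¹' {q})) : s⁻¹ ∈ ({z} ∪ φ ⁻¹' {q}) := by
    rcases hs with rfl | hs
    · exact Or.inl (inv_eq_of_mul_eq_one_right hz2)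
    · exact Or.inr (by simp_all [inv_eq_of_mul_eq_one_right hq2])
  rw [adjMat_cayleyGraph_s8 hsymm (by simp [hz1.symm, hq1.symm]), hind, cayleyMatrix_add]

theorem isIntegralGraph_cayleyGraph_union_preimage {G Q : Type*} [Group G] [Fintype G]
    [DecidableEq G] [Group Q] [Fintype Q] [DecidableEq Q] {φ : G →* Q}
    (hφ : Function.Surjective φ) {z : G} (hz : z ∈ Subgroup.center G) (hz2 : z * z = 1)
    (hz1 : z ≠ 1) {q : Q} (hq2 : q * q = 1) (hq1 : q ≠ 1) (hzq : φ z ≠ q) :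
    IsIntegralGraph (cayleyGraph ({z} ∪ φ ⁻¹' {q})) := by
  set P : Matrix G G ℂ := cayleyMatrix (Pi.single z 1)
  set B : Matrix G G ℂ := cayleyMatrix (Pi.single q 1 ∘ φ)
  set c := #{a | φ a = 1}
  have hPP : P * P = 1 := cayleyMatrix_single_mul_self hz2
  have hPB : Commute P B := commute_cayleyMatrix_single_of_mem_center hz _
  have hB : B ^ 3 = (c : ℂ) ^ 2 • B := cayleyMatrix_single_comp_pow_three hφ hq2
  intro μ hμ
  rw [adjMat_cayleyGraph_union_preimage hz2 hz1 hq2 hq1 hzq,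
    ← AlgEquiv.spectrum_eq (toLinAlgEquiv' : Matrix G G ℂ ≃ₐ[ℂ] _), map_add,
    ← Module.End.hasEigenvalue_iff_mem_spectrum] at hμ
  have hint (ε : ℤ) (h : Module.End.HasEigenvalue (toLinAlgEquiv' B) (μ - ε)) :
      ∃ n : ℤ, μ = n := by
    rcases h.eq_zero_or_eq_or_eq_neg (by rw [← map_pow, hB, map_smul]) with h | h | h
    exacts [⟨ε, by linear_combination h⟩, ⟨c + ε, by push_cast; linear_combination h⟩,
      ⟨-c + ε, by push_cast; linear_combination h⟩]
  rcases hμ.sub_one_or_add_one_of_add (by rw [← map_mul, hPP, map_one]) (hPB.map _) with h | h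
  · exact hint 1 (by simpa using h)
  · exact hint (-1) (by simpa using h)

namespace DihedralGroup

def map {n k : ℕ} (f : ZMod n →+ ZMod k) : DihedralGroup n →* DihedralGroup k where
  toFun
    | r i => r (f i)
    | sr i => sr (f i)
  map_one' := congrArg r (map_zero f)
  map_mul' := by rintro (i | i) (j | j) <;> simp [map_add, map_sub]

theorem map_surjective {n k : ℕ} {f : ZMod n →+ ZMod k} (hf : Function.Surjective f) :
    Function.Surjective (map f) := by
  rintro (i | i) <;> obtain ⟨j, rfl⟩ := hf i
  exacts [⟨r j, rfl⟩, ⟨sr j, rfl⟩]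

theorem closure_r_one_sr_zero (n : ℕ) :
    Subgroup.closure {r 1, sr 0} = (⊤ : Subgroup (DihedralGroup n)) := by
  refine eq_top_iff.2 fun g _ => ?_
  have hr (i : ZMod n) : r i ∈ Subgroup.closure {r 1, sr 0} := by
    rw [← ZMod.intCast_zmod_cast i, ← r_one_zpow]
    exact Subgroup.zpow_mem _ (Subgroup.subset_closure (by simp)) _
  rcases g with i | i
  · exact hr i
  · have := Subgroup.mul_mem _ (Subgroup.subset_closure (by simp : sr 0 ∈ _)) (hr i)
    rwa [sr_mul_r, zero_add] at this

theorem r_mem_center {n : ℕ} {i : ZMod n} (hi : i + i = 0) :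
    r i ∈ Subgroup.center (DihedralGroup n) := by
  rw [Subgroup.mem_center_iff]
  rintro (j | j)
  · simp [add_comm]
  · simp [sub_eq_add_neg, neg_eq_of_add_eq_zero_right hi]

/-- The quotient map `D_{2m} → D_{2m}/⟨a²⟩ ≅ D_2`. -/
def modTwo (m : ℕ) : DihedralGroup (2 * m) →* DihedralGroup 2 :=
  map (ZMod.castHom (dvd_mul_right 2 m) (ZMod 2)).toAddMonoidHom

theorem modTwo_surjective (m : ℕ) : Function.Surjective (modTwo m) :=
  map_surjective (ZMod.castHom_surjective (dvd_mul_right 2 m))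

theorem setOf_sr_even_eq_preimage_modTwo (m : ℕ) [NeZero (2 * m)] :
    {x | ∃ k : ℕ, k < m ∧ x = sr ((2 * k : ℕ) : ZMod (2 * m))} = modTwo m ⁻¹' {sr 0} := by
  ext (i | j)
  · simp [modTwo, map]
  · simp only [Set.mem_ofPred_eq, sr.injEq, Set.mem_preimage, Set.mem_singleton_iff]
    show _ ↔ sr (ZMod.cast j) = sr 0
    rw [sr.injEq]
    constructor
    · rintro ⟨k, -, rfl⟩
      rw [ZMod.cast_natCast (dvd_mul_right 2 m), ZMod.natCast_eq_zero_iff_even]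
      exact even_two_mul k
    · rw [ZMod.cast_eq_val, ZMod.natCast_eq_zero_iff_even]
      rintro ⟨k, hk⟩
      refine ⟨k, by have := ZMod.val_lt j; omega, ?_⟩
      rw [← two_mul] at hk
      rw [← hk, ZMod.natCast_zmod_val]

theorem closure_r_union_preimage_modTwo {m : ℕ} (hm : Odd m) :
    Subgroup.closure ({r (m : ZMod (2 * m))} ∪ modTwo m ⁻¹' {sr 0}) = ⊤ := by
  have hsr (j : ℕ) (hj : Even j) : sr (j : ZMod (2 * m)) ∈ modTwo m ⁻¹' {sr 0} := by
    simp [modTwo, map, ZMod.natCast_eq_zero_iff_even.2 hj]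
  have hsr0 : sr 0 ∈ modTwo m ⁻¹' {sr 0} := by simpa using hsr 0 .zero
  have hr1 : r 1 = r (m : ZMod (2 * m)) * (sr 0 * sr ((m + 1 : ℕ) : ZMod (2 * m))) := by
    rw [sr_mul_sr, r_mul_r, sub_zero, Nat.cast_succ, ← add_assoc, ← Nat.cast_add, ← two_mul,
      ZMod.natCast_self, zero_add]
  rw [eq_top_iff, ← closure_r_one_sr_zero, Subgroup.closure_le, Set.insert_subset_iff,
    Set.singleton_subset_iff, hr1]
  exact ⟨Subgroup.mul_mem _ (Subgroup.subset_closure (Or.inl rfl)) (Subgroup.mul_mem _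
    (Subgroup.subset_closure (Or.inr hsr0)) (Subgroup.subset_closure (Or.inr (hsr _ hm.add_one)))),
    Subgroup.subset_closure (Or.inr hsr0)⟩

end DihedralGroup

theorem stmt8_general (m : ℕ) (hmodd : Odd m) [NeZero (2 * m)]
    (S : Set (DihedralGroup (2 * m)))
    (hS : S = {DihedralGroup.r (m : ZMod (2 * m))} ∪
      {x | ∃ k : ℕ, k < m ∧ x = DihedralGroup.sr ((2 * k : ℕ) : ZMod (2 * m))}) :
    (cayleyGraph S).Connected ∧ IsIntegralGraph (cayleyGraph S) := by
  rw [setOf_sr_even_eq_preimage_modTwo] at hS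
  subst hS
  have hm : (m : ZMod (2 * m)) + m = 0 := by
    rw [← Nat.cast_add, ← two_mul, ZMod.natCast_self]
  have hm0 : 0 < m := Nat.pos_of_ne_zero (right_ne_zero_of_mul (NeZero.ne (2 * m)))
  have hm1 : r (m : ZMod (2 * m)) ≠ 1 := by
    rw [one_def, Ne, r.injEq, ZMod.natCast_eq_zero_iff]
    exact Nat.not_dvd_of_pos_of_lt hm0 (by omega)
  exact ⟨cayleyGraph_connected_of_closure_eq_top (closure_r_union_preimage_modTwo hmodd),
    isIntegralGraph_cayleyGraph_union_preimage (modTwo_surjective m) (r_mem_center hm)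
      (by rw [r_mul_r, hm, one_def]) hm1 (sr_mul_self 0) (by rintro ⟨⟩) (by rintro ⟨⟩)⟩

/-- Corollary 2.6. For odd `m > 0`, with `S₁ = {a^m}` and
`S₂ = b⟨a²⟩ = {ba^{2k} : 0 ≤ k ≤ m−1}` in `D_{2m}`, the Cayley graph
`X(D_{2m}, S₁ ∪ S₂)` is connected and integral. -/
theorem stmt8 (m : ℕ) (hmodd : Odd m) (hm : 0 < m) [NeZero (2 * m)]
    (S : Set (DihedralGroup (2 * m)))
    (hS : S = {DihedralGroup.r (m : ZMod (2 * m))} ∪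
      {x | ∃ k : ℕ, k < m ∧ x = DihedralGroup.sr ((2 * k : ℕ) : ZMod (2 * m))}) :
    (cayleyGraph S).Connected ∧ IsIntegralGraph (cayleyGraph S) :=
  stmt8_general m hmodd S hS
end

section
/- Let G be a finite abelian group and let T^m be a multi-subset of G with multiplicity function m_T : G → ℕ. Then T^m is integral (i.e., Σ_{g∈G} m_T(g)χ(g) ∈ ℤ for every irreducible character χ of G) if and only if T^m belongs to the integral cone C(G), i.e., the multiplicity function m_T is constant on each atom [g] = {x ∈ G : ⟨x⟩ = ⟨g⟩}. -/
/-!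
Put `n = |G|`, so that every value `χ g` is an `n`-th root of unity. The Galois group of
`ℚ(ζₙ)/ℚ` acts on `n`-th roots of unity by `y ↦ y ^ a` for `a` coprime to `n`, and every such
`a` occurs. Hence an integral combination of `n`-th roots of unity is a rational integer iff it is
unchanged when every root is raised to the power `a`, for every `a` coprime to `n`. Applied to
`∑ m(g) χ(g)` with `χ(g) ^ a = χ(g ^ a)`, this invariance says that the Fourier transforms of
`m` and of `g ↦ m(g ^ b)` agree, where `b` inverts `a` modulo `n`; by Fourier inversion this holds
iff `m(g ^ a) = m(g)` for all `g`. Finally `⟨g⟩ = ⟨g'⟩` iff `g' = g ^ a` for some `a` coprime to `n`.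
-/

open Subgroup

theorem Nat.exists_coprime_modEq_of_dvd {d N k : ℕ} [NeZero N] (hd : d ∣ N) (hk : k.Coprime d) :
    ∃ a, N.Coprime a ∧ a ≡ k [MOD d] := by
  obtain ⟨u, hu⟩ := ZMod.unitsMap_surjective hd (ZMod.unitOfCoprime k hk)
  refine ⟨(u : ZMod N).val, (ZMod.val_coe_unit_coprime u).symm, ?_⟩
  rw [← ZMod.natCast_eq_natCast_iff, ← ZMod.cast_eq_val, ← ZMod.unitsMap_val hd, hu,
    ZMod.coe_unitOfCoprime]

namespace Subgroup

variable {G : Type*} [Group G]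

theorem zpowers_pow_eq_of_coprime {g : G} {a : ℕ} (ha : a.Coprime (orderOf g)) :
    zpowers (g ^ a) = zpowers g :=
  le_antisymm (zpowers_le.mpr (pow_mem (mem_zpowers g) a))
    (zpowers_le.mpr (mem_zpowers_pow_iff.mpr ha))

theorem zpowers_eq_zpowers_iff_exists_pow [Finite G] {g g' : G} :
    zpowers g = zpowers g' ↔ ∃ a : ℕ, (Nat.card G).Coprime a ∧ g ^ a = g' := by
  constructor
  · intro h
    obtain ⟨k, rfl⟩ := (Submonoid.mem_powers_iff _ _).mp
      (mem_powers_iff_mem_zpowers.mpr (h ▸ mem_zpowers g'))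
    have hk : k.Coprime (orderOf g) := mem_zpowers_pow_iff.mp (h ▸ mem_zpowers g)
    obtain ⟨a, ha, hak⟩ := Nat.exists_coprime_modEq_of_dvd (_root_.orderOf_dvd_natCard g) hk
    exact ⟨a, ha, pow_eq_pow_iff_modEq.mpr hak⟩
  · rintro ⟨a, ha, rfl⟩
    exact (zpowers_pow_eq_of_coprime
      (ha.coprime_dvd_left (_root_.orderOf_dvd_natCard g)).symm).symm

end Subgroup

/-- Fourier inversion on a finite abelian group, transported from the orthogonality relations
for the additive characters of `Additive G`. -/
theorem eq_of_forall_sum_mul_monoidHom_eq {G : Type*} [CommGroup G] [Fintype G] {f f' : G → ℂ}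
    (h : ∀ χ : G →* ℂ, ∑ g, f g * χ g = ∑ g, f' g * χ g) : f = f' := by
  classical
  funext x
  have hψ (ψ : AddChar (Additive G) ℂ) : ∑ g, (f g - f' g) * ψ (.ofMul g) = 0 := by
    rw [← sub_eq_zero.mpr (h ψ.toMonoidHom), ← Finset.sum_sub_distrib]
    simp only [sub_mul]
    rfl
  have hcard : (Fintype.card G : ℂ) * (f x - f' x) = 0 := calc
    _ = ∑ g, (f g - f' g) * ∑ ψ : AddChar (Additive G) ℂ, ψ (.ofMul g - .ofMul x) := by
        simp [AddChar.sum_apply_eq_ite, sub_eq_zero, mul_comm]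
    _ = ∑ ψ : AddChar (Additive G) ℂ,
          ψ (-.ofMul x) * ∑ g, (f g - f' g) * ψ (.ofMul g) := by
        simp only [Finset.mul_sum, sub_eq_add_neg, AddChar.map_add_eq_mul]
        rw [Finset.sum_comm]
        exact Finset.sum_congr rfl fun _ _ => Finset.sum_congr rfl fun _ _ => by ring
    _ = 0 := by simp [hψ]
  simpa [sub_eq_zero, Fintype.card_ne_zero] using hcard

theorem IsPrimitiveRoot.algEquiv_apply_of_pow_eq_one {R S : Type*} [CommRing R] [CommRing S]
    [IsDomain S] [Algebra R S] {μ : S} {n : ℕ} [NeZero n] (hμ : IsPrimitiveRoot μ n)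
    (σ : S ≃ₐ[R] S) {y : S} (hy : y ^ n = 1) :
    σ y = y ^ (hμ.autToPow R σ : ZMod n).val := by
  obtain ⟨i, -, rfl⟩ := hμ.eq_pow_of_pow_eq_one hy
  rw [map_pow, ← hμ.autToPow_spec R σ, ← pow_mul, mul_comm, pow_mul]

theorem IsCyclotomicExtension.exists_algEquiv_apply_eq_pow {n : ℕ} [NeZero n] (K : Type*)
    [Field K] [Algebra ℚ K] [IsCyclotomicExtension {n} ℚ K] {a : ℕ} (ha : n.Coprime a) :
    ∃ σ : K ≃ₐ[ℚ] K, ∀ y : K, y ^ n = 1 → σ y = y ^ a := by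
  let e := autEquivPow K (Polynomial.cyclotomic.irreducible_rat (Nat.pos_of_neZero n))
  let σ := e.symm (ZMod.unitOfCoprime a ha.symm)
  have hσ : ((zeta_spec n ℚ K).autToPow ℚ σ : ZMod n) = a :=
    congrArg Units.val (e.apply_symm_apply _)
  refine ⟨σ, fun y hy => ?_⟩
  rw [(zeta_spec n ℚ K).algEquiv_apply_of_pow_eq_one σ hy, hσ, ZMod.val_natCast,
    ← pow_eq_pow_mod _ hy]

theorem exists_intCast_eq_sum_iff_forall_coprime {F ι : Type*} [Field F] [CharZero F]
    [IsAlgClosed F] [Fintype ι] {n : ℕ} [NeZero n] (c : ι → ℤ) {x : ι → F}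
    (hx : ∀ i, x i ^ n = 1) :
    (∃ z : ℤ, ∑ i, c i * x i = z) ↔
      ∀ a : ℕ, n.Coprime a → ∑ i, c i * x i ^ a = ∑ i, c i * x i := by
  let K := CyclotomicField n ℚ
  have : IsCyclotomicExtension {n} ℚ K := CyclotomicField.isCyclotomicExtension n ℚ
  have : IsGalois ℚ K := IsCyclotomicExtension.isGalois {n} ℚ K
  let φ : K →ₐ[ℚ] F := IsAlgClosed.lift
  have hφinj : Function.Injective φ := φ.toRingHom.injective
  obtain ⟨ζ, hζ⟩ : ∃ ζ : K, IsPrimitiveRoot ζ n := ⟨_, IsCyclotomicExtension.zeta_spec n ℚ K⟩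
  have hlift (i : ι) : ∃ y : K, y ^ n = 1 ∧ φ y = x i := by
    obtain ⟨k, -, hk⟩ := (hζ.map_of_injective hφinj).eq_pow_of_pow_eq_one (hx i)
    exact ⟨ζ ^ k, by rw [← pow_mul, mul_comm, pow_mul, hζ.pow_eq_one, one_pow],
      by rw [map_pow, hk]⟩
  choose y hyn hyx using hlift
  let s (a : ℕ) : K := ∑ i, (c i : K) * y i ^ a
  have hφ (a : ℕ) : φ (s a) = ∑ i, c i * x i ^ a := by simp [s, hyx, map_intCast φ]
  have hφ1 : φ (s 1) = ∑ i, c i * x i := by simpa using hφ 1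
  have hσ (σ : K ≃ₐ[ℚ] K) (a : ℕ) (hσa : ∀ y : K, y ^ n = 1 → σ y = y ^ a) :
      σ (s 1) = s a := by
    simp [s, hσa _ (hyn _), map_intCast σ]
  constructor
  · rintro ⟨z, hz⟩ a ha
    obtain ⟨σ, hσa⟩ := IsCyclotomicExtension.exists_algEquiv_apply_eq_pow K ha
    have hs : s 1 = z := hφinj (by rw [hφ1, hz, map_intCast])
    rw [← hφ, ← hσ σ a hσa, hs, map_intCast, map_intCast, hz]
  · intro h
    have hfix (σ : K ≃ₐ[ℚ] K) : σ (s 1) = s 1 := by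
      refine hφinj ?_
      rw [hσ σ _ fun _ => hζ.algEquiv_apply_of_pow_eq_one σ, hφ, hφ1,
        h _ (ZMod.val_coe_unit_coprime _).symm]
    obtain ⟨q, hq⟩ := (IsGalois.mem_range_algebraMap_iff_fixed _).mpr hfix
    have hint : IsIntegral ℤ (algebraMap ℚ F q) := by
      rw [← φ.commutes, hq, hφ1]
      refine IsIntegral.sum _ fun i _ => (isIntegral_algebraMap (x := c i)).mul ?_
      exact IsIntegral.of_pow (Nat.pos_of_neZero n) (by rw [hx i]; exact isIntegral_one)
    obtain ⟨z, rfl⟩ := IsIntegrallyClosed.isIntegral_iff.mp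
      ((isIntegral_algebraMap_iff (algebraMap ℚ F).injective).mp hint)
    exact ⟨z, by rw [← hφ1, ← hq, φ.commutes]; simp⟩

section CharacterSums

variable {G : Type*} [CommGroup G] [Fintype G]

theorem apply_pow_eq_of_forall_sum_mul_pow_eq {f : G → ℂ} {a : ℕ} (ha : (Nat.card G).Coprime a)
    (h : ∀ χ : G →* ℂ, ∑ g, f g * χ g ^ a = ∑ g, f g * χ g) (g : G) : f (g ^ a) = f g := by
  let P := powCoprime ha
  have hPg (g : G) : P g = g ^ a := rfl
  have hP : f ∘ P.symm = f := eq_of_forall_sum_mul_monoidHom_eq fun χ => by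
    rw [← h χ, ← P.sum_comp]
    simp only [Function.comp_apply, Equiv.symm_apply_apply]
    simp only [hPg, map_pow]
  have hfP := congrFun hP (P g)
  rwa [Function.comp_apply, Equiv.symm_apply_apply, hPg, eq_comm] at hfP

theorem sum_mul_pow_eq_of_forall_zpowers_eq {f : G → ℂ}
    (hf : ∀ g g' : G, zpowers g = zpowers g' → f g = f g') (χ : G →* ℂ) {a : ℕ}
    (ha : (Nat.card G).Coprime a) : ∑ g, f g * χ g ^ a = ∑ g, f g * χ g := calc
  _ = ∑ g, f (g ^ a) * χ (g ^ a) := Finset.sum_congr rfl fun g _ => by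
        rw [hf g (g ^ a) (zpowers_eq_zpowers_iff_exists_pow.mpr ⟨a, ha, rfl⟩), map_pow]
  _ = ∑ g, f g * χ g := (powCoprime ha).sum_comp fun g => f g * χ g

end CharacterSums

/-- Lemma 3.2. Let `G` be a finite abelian group and `m` the multiplicity
function of a multi-subset of `G`. Then the multi-subset is integral
(`Σ_g m(g)χ(g) ∈ ℤ` for every irreducible character `χ` of `G`, i.e. every
degree-one character `χ : G →* ℂ`) iff it belongs to the integral cone `C(G)`,
i.e. `m` is constant on each atom `[g] = {x : ⟨x⟩ = ⟨g⟩}`. -/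
theorem stmt9 {G : Type*} [CommGroup G] [Fintype G] (m : G → ℕ) :
    (∀ χ : G →* ℂ, ∃ z : ℤ, ∑ g : G, (m g : ℂ) * χ g = (z : ℂ)) ↔
      ∀ g g' : G, Subgroup.zpowers g = Subgroup.zpowers g' → m g = m g' := by
  have hint (χ : G →* ℂ) := exists_intCast_eq_sum_iff_forall_coprime (n := Nat.card G)
    (fun g => (m g : ℤ)) (x := fun g => χ g) fun g => by rw [← map_pow, pow_card_eq_one', map_one]
  simp only [Int.cast_natCast] at hint
  constructor
  · intro h g g' hgg'
    obtain ⟨a, ha, rfl⟩ := zpowers_eq_zpowers_iff_exists_pow.mp hgg'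
    have hpow := apply_pow_eq_of_forall_sum_mul_pow_eq ha (fun χ => (hint χ).mp (h χ) a ha) g
    exact_mod_cast hpow.symm
  · intro hm χ
    exact (hint χ).mpr fun a ha =>
      sum_mul_pow_eq_of_forall_zpowers_eq (fun g g' h => congrArg _ (hm g g' h)) χ ha
end

section
/- Let n ≥ 3, let D_n = ⟨a,b | a^n = b^2 = 1, bab = a^{-1}⟩, and let T ⊆ ⟨a⟩ be a union of atoms of the Boolean algebra B(⟨a⟩). Then for every 1 ≤ h ≤ ⌊(n−1)/2⌋, 2χ_h(T²) = (χ_h(T))², where χ_h(T) = Σ_{x∈T} χ_h(x) and χ_h(T²) = Σ_{x,y∈T} χ_h(xy) over ordered pairs. -/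
open DihedralGroup Polynomial

set_option maxHeartbeats 1000000 in
/-- Lemma 3.6. If `T ⊆ ⟨a⟩` is a union of atoms of `B(⟨a⟩)`, then
`2χ_h(T²) = (χ_h(T))²` for every `1 ≤ h ≤ ⌊(n−1)/2⌋`. -/
theorem stmt13 (n : ℕ) (hn : 3 ≤ n) [NeZero n]
    (T : Set (DihedralGroup n)) (hB : InBooleanAlgebra n T) :
    ∀ h : ℕ, 1 ≤ h → h ≤ (n - 1) / 2 →
      2 * chiSum2 n h T = (chiSum n h T) ^ 2 := by
  classical
  obtain ⟨hsub, hatom⟩ := hB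
  intro h _ _
  have hnR : (n : ℝ) ≠ 0 := Nat.cast_ne_zero.mpr (NeZero.ne n)
  -- the angle function
  set θ : ZMod n → ℝ := fun k => 2 * k.val * h * Real.pi / n with hθ
  -- cosine only depends on the residue mod n
  have keyC : ∀ m m' : ℤ, ((m : ZMod n) = (m' : ZMod n)) →
      Real.cos (2 * (m : ℝ) * h * Real.pi / n) = Real.cos (2 * (m' : ℝ) * h * Real.pi / n) := by
    intro m m' hmm
    obtain ⟨t, ht⟩ := ((ZMod.intCast_eq_intCast_iff m m' n).1 hmm).dvd
    have hm' : (m' : ℝ) = m + n * t := by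
      have : m' = m + n * t := by linarith [ht]
      exact_mod_cast congrArg (Int.cast : ℤ → ℝ) this
    have e : 2 * (m' : ℝ) * h * Real.pi / n
        = 2 * (m : ℝ) * h * Real.pi / n + ((t * h : ℤ) : ℝ) * (2 * Real.pi) := by
      rw [hm']; push_cast; field_simp
    rw [e, Real.cos_add_int_mul_two_pi]
  have hval : ∀ k : ZMod n, ((k.val : ℤ) : ZMod n) = k := by
    intro k
    simp [ZMod.natCast_val, ZMod.cast_id]
  have hθval : ∀ k : ZMod n, θ k = 2 * ((k.val : ℤ) : ℝ) * h * Real.pi / n := by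
    intro k; simp [hθ]
  have hadd : ∀ k l : ZMod n, Real.cos (θ (k + l)) = Real.cos (θ k + θ l) := by
    intro k l
    set m2 : ℤ := (k.val : ℤ) + (l.val : ℤ) with hm2
    have h2 : θ k + θ l = 2 * (m2 : ℝ) * h * Real.pi / n := by
      rw [hθval k, hθval l, hm2]; push_cast; ring
    rw [hθval (k + l), h2]
    exact keyC _ _ (by rw [hm2]; push_cast [hval]; ring)
  have hsubc : ∀ k l : ZMod n, Real.cos (θ (k - l)) = Real.cos (θ k - θ l) := by
    intro k l
    set m2 : ℤ := (k.val : ℤ) - (l.val : ℤ) with hm2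
    have h2 : θ k - θ l = 2 * (m2 : ℝ) * h * Real.pi / n := by
      rw [hθval k, hθval l, hm2]; push_cast; ring
    rw [hθval (k - l), h2]
    exact keyC _ _ (by rw [hm2]; push_cast [hval]; ring)
  -- the index set
  set K : Finset (ZMod n) := Finset.univ.filter (fun k => DihedralGroup.r k ∈ T) with hK
  have hmemK : ∀ k : ZMod n, k ∈ K ↔ DihedralGroup.r k ∈ T := by
    intro k; simp [hK]
  -- K is closed under negation
  have hgcd : ∀ l : ZMod n, Nat.gcd (-l).val n = Nat.gcd l.val n := by
    intro l
    by_cases hl : l = 0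
    · simp [hl]
    · have hlt : l.val ≤ n := le_of_lt (ZMod.val_lt l)
      rw [ZMod.neg_val, if_neg hl]
      have e1 : Nat.gcd (n - l.val) (n - (n - l.val)) = Nat.gcd (n - l.val) n :=
        Nat.gcd_sub_self_right (Nat.sub_le n l.val)
      rw [Nat.sub_sub_self hlt] at e1
      rw [← e1, Nat.gcd_comm (n - l.val) l.val]
      exact Nat.gcd_sub_self_right hlt
  have hKneg : ∀ l : ZMod n, l ∈ K ↔ -l ∈ K := by
    intro l
    rw [hmemK, hmemK]
    exact (hatom l (-l) (hgcd l).symm)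
  have hinj : ∀ x ∈ K, ∀ y ∈ K, DihedralGroup.r x = DihedralGroup.r y → x = y := by
    intro x _ y _ hxy
    exact DihedralGroup.r.inj hxy
  -- rewrite T as an image
  have hTeq : T = ↑(K.image DihedralGroup.r) := by
    ext x
    constructor
    · intro hx
      obtain ⟨k, rfl⟩ := hsub hx
      simp only [Finset.coe_image, Set.mem_image, Finset.mem_coe]
      exact ⟨k, (hmemK k).2 hx, rfl⟩
    · intro hx
      simp only [Finset.coe_image, Set.mem_image, Finset.mem_coe] at hx
      obtain ⟨k, hk, rfl⟩ := hx
      exact (hmemK k).1 hk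
  have hchi : ∀ k : ZMod n, chi n h (DihedralGroup.r k) = 2 * Real.cos (θ k) := by
    intro k; simp [chi, hθ]
  have hS1 : chiSum n h T = ∑ k ∈ K, 2 * Real.cos (θ k) := by
    rw [chiSum, hTeq, finsum_mem_coe_finset, Finset.sum_image hinj]
    exact Finset.sum_congr rfl fun k _ => hchi k
  have hS2 : chiSum2 n h T = ∑ k ∈ K, ∑ l ∈ K, 2 * Real.cos (θ (k + l)) := by
    rw [chiSum2, hTeq]
    rw [finsum_mem_coe_finset, Finset.sum_image hinj]
    refine Finset.sum_congr rfl fun k _ => ?_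
    rw [finsum_mem_coe_finset, Finset.sum_image hinj]
    refine Finset.sum_congr rfl fun l _ => ?_
    rw [DihedralGroup.r_mul_r]
    exact hchi (k + l)
  -- the reindexing step
  have hswap : ∀ k : ZMod n, (∑ l ∈ K, Real.cos (θ k - θ l)) = ∑ l ∈ K, Real.cos (θ k + θ l) := by
    intro k
    refine Finset.sum_nbij' (fun l => -l) (fun l => -l) ?_ ?_ ?_ ?_ ?_
    · intro l hl; exact (hKneg l).1 hl
    · intro l hl; exact (hKneg l).1 hl
    · intro l _; simp
    · intro l _; simp
    · intro l _
      rw [← hsubc, ← hadd]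
      congr 1
      ring
  rw [hS1, hS2, sq, Finset.sum_mul_sum]
  have expand : ∀ k l : ZMod n,
      (2 * Real.cos (θ k)) * (2 * Real.cos (θ l))
        = 2 * Real.cos (θ k + θ l) + 2 * Real.cos (θ k - θ l) := by
    intro k l
    rw [Real.cos_add, Real.cos_sub]; ring
  rw [Finset.mul_sum]
  refine Finset.sum_congr rfl fun k hk => ?_
  have hKadd : (∑ l ∈ K, Real.cos (θ (k + l))) = ∑ l ∈ K, Real.cos (θ k + θ l) :=
    Finset.sum_congr rfl fun l _ => hadd k l
  calc 2 * ∑ l ∈ K, 2 * Real.cos (θ (k + l))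
      = 4 * ∑ l ∈ K, Real.cos (θ k + θ l) := by
        rw [← hKadd, ← Finset.mul_sum]; ring
    _ = 2 * (∑ l ∈ K, Real.cos (θ k + θ l)) + 2 * ∑ l ∈ K, Real.cos (θ k - θ l) := by
        rw [hswap k]; ring
    _ = ∑ l ∈ K, (2 * Real.cos (θ k + θ l) + 2 * Real.cos (θ k - θ l)) := by
        rw [Finset.mul_sum, Finset.mul_sum, ← Finset.sum_add_distrib]
    _ = ∑ l ∈ K, (2 * Real.cos (θ k)) * (2 * Real.cos (θ l)) :=
        Finset.sum_congr rfl fun l _ => (expand k l).symm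
end
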